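/- arXiv:1107.3267 — 8 statements merged into one kernel-verified Lean document; each statement's English description precedes it below -/
import Mathlib

section
/- Let Φ : (0,∞) → (0,∞) be a positive function which is of strictly lower type p₀ for some p₀ ∈ (0,∞). Then the set P := {p ∈ (0,∞) : Φ(st) ≤ t^p Φ(s) for all t ∈ (0,1) and s ∈ (0,∞)} is nonempty and bounded above, and Φ is of strictly lower type p_Φ := sup P; that is, Φ(st) ≤ t^{p_Φ} Φ(s) for all t ∈ (0,1) and s ∈ (0,∞). -/
/-- If a positive function `Φ` on `(0,∞)` is of strictly lower type `p₀` for some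
`p₀ ∈ (0,∞)`, then the set `P` of strictly lower type exponents is nonempty and bounded above,
and `Φ` is of strictly lower type `p_Φ := sSup P`. -/
theorem stmt0 (Φ : ℝ → ℝ) (hpos : ∀ t ∈ Set.Ioi (0:ℝ), 0 < Φ t)
    (p₀ : ℝ) (hp₀ : 0 < p₀)
    (hlow : ∀ s ∈ Set.Ioi (0:ℝ), ∀ t ∈ Set.Ioo (0:ℝ) 1, Φ (s * t) ≤ t ^ p₀ * Φ s) :
    ({p : ℝ | 0 < p ∧ ∀ s ∈ Set.Ioi (0:ℝ), ∀ t ∈ Set.Ioo (0:ℝ) 1,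
        Φ (s * t) ≤ t ^ p * Φ s}).Nonempty ∧
    BddAbove {p : ℝ | 0 < p ∧ ∀ s ∈ Set.Ioi (0:ℝ), ∀ t ∈ Set.Ioo (0:ℝ) 1,
        Φ (s * t) ≤ t ^ p * Φ s} ∧
    (∀ s ∈ Set.Ioi (0:ℝ), ∀ t ∈ Set.Ioo (0:ℝ) 1,
      Φ (s * t) ≤ t ^ sSup {p : ℝ | 0 < p ∧ ∀ s' ∈ Set.Ioi (0:ℝ), ∀ t' ∈ Set.Ioo (0:ℝ) 1,
        Φ (s' * t') ≤ t' ^ p * Φ s'} * Φ s) := by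
  set P : Set ℝ := {p : ℝ | 0 < p ∧ ∀ s ∈ Set.Ioi (0:ℝ), ∀ t ∈ Set.Ioo (0:ℝ) 1,
      Φ (s * t) ≤ t ^ p * Φ s} with hPdef
  have hP₀ : p₀ ∈ P := ⟨hp₀, hlow⟩
  have hne : P.Nonempty := ⟨p₀, hP₀⟩
  have h1pos : (0:ℝ) < Φ 1 := hpos 1 (by norm_num)
  have hhalf : (0:ℝ) < Φ (1/2) := hpos (1/2) (by norm_num)
  have hLneg : Real.log (1/2) < 0 := Real.log_neg (by norm_num) (by norm_num)
  have hbdd : BddAbove P := by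
    refine ⟨Real.log (Φ (1/2) / Φ 1) / Real.log (1/2), ?_⟩
    rintro p ⟨hp, hplow⟩
    have h1 : Φ (1 * (1/2)) ≤ (1/2:ℝ) ^ p * Φ 1 :=
      hplow 1 (by norm_num) (1/2) (by norm_num)
    rw [one_mul] at h1
    have hc : Φ (1/2) / Φ 1 ≤ (1/2:ℝ) ^ p := (div_le_iff₀ h1pos).2 h1
    have hlog : Real.log (Φ (1/2) / Φ 1) ≤ p * Real.log (1/2) := by
      have := Real.log_le_log (div_pos hhalf h1pos) hc
      rwa [Real.log_rpow (by norm_num)] at this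
    exact (le_div_iff_of_neg hLneg).2 hlog
  refine ⟨hne, hbdd, ?_⟩
  intro s hs t ht
  set q := sSup P with hq
  have key : ∀ r < q, Φ (s * t) ≤ t ^ r * Φ s := by
    intro r hr
    obtain ⟨p, hpP, hrp⟩ := exists_lt_of_lt_csSup hne hr
    calc Φ (s * t) ≤ t ^ p * Φ s := hpP.2 s hs t ht
      _ ≤ t ^ r * Φ s := by
          have : t ^ p ≤ t ^ r :=
            Real.rpow_le_rpow_of_exponent_ge ht.1 ht.2.le hrp.le
          exact mul_le_mul_of_nonneg_right this (hpos s hs).le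
  have cont : Filter.Tendsto (fun r : ℝ => t ^ r * Φ s) (nhdsWithin q (Set.Iio q))
      (nhds (t ^ q * Φ s)) := by
    apply Filter.Tendsto.mono_left _ nhdsWithin_le_nhds
    exact ((Real.continuousAt_const_rpow ht.1.ne').mul continuousAt_const)
  exact ge_of_tendsto cont (eventually_nhdsWithin_of_forall key)
end

section
/- Let p ∈ (0,1] and let Φ : (0,∞) → (0,∞) be continuous, of upper type 1 with constant C₁, and of strictly lower type p. Then there exists C ≥ 1, depending only on C₁ and p, such that for every t ∈ (0,∞) the integral ∫₀ᵗ Φ(s)/s ds is finite and C^{-1} Φ(t) ≤ ∫₀ᵗ Φ(s)/s ds ≤ C Φ(t). -/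
open MeasureTheory Set

/-!
Strict lower type `p` gives `Φ s / s ≤ Φ t t^{-p} s^{p-1}` for `0 < s ≤ t`, and `s^{p-1}` is
integrable on `(0, t]` with integral `t^p / p`; this yields integrability and the bound
`∫₀ᵗ Φ(s)/s ds ≤ Φ(t)/p`. Upper type 1 gives `Φ(s)/s ≥ Φ(t)/(C₁ t)` for `s ≤ t`, and integrating
over `(t/2, t]` yields `∫₀ᵗ Φ(s)/s ds ≥ Φ(t)/(2 C₁)`.
-/

def IsUpperTypeOne (C₁ : ℝ) (Φ : ℝ → ℝ) : Prop :=
  ∀ s ∈ Ioi (0:ℝ), ∀ t : ℝ, 1 ≤ t → Φ (s * t) ≤ C₁ * t * Φ s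

def IsStrictlyLowerType (p : ℝ) (Φ : ℝ → ℝ) : Prop :=
  ∀ s ∈ Ioi (0:ℝ), ∀ t ∈ Ioo (0:ℝ) 1, Φ (s * t) ≤ t ^ p * Φ s

theorem integrableOn_Ioc_rpow_sub_one {p t : ℝ} (hp : 0 < p) (ht : 0 ≤ t) :
    IntegrableOn (fun s : ℝ => s ^ (p - 1)) (Ioc 0 t) := by
  rw [← intervalIntegrable_iff_integrableOn_Ioc_of_le ht]
  exact intervalIntegral.intervalIntegrable_rpow' (by linarith)

namespace IsStrictlyLowerType

variable {p : ℝ} {Φ : ℝ → ℝ}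

theorem le_rpow_mul (hΦ : IsStrictlyLowerType p Φ) {s t : ℝ} (hs : 0 < s) (hst : s ≤ t) :
    Φ s ≤ (s / t) ^ p * Φ t := by
  have ht : 0 < t := hs.trans_le hst
  rcases hst.eq_or_lt with rfl | hlt
  · rw [div_self hs.ne', Real.one_rpow, one_mul]
  · simpa [mul_div_cancel₀ _ ht.ne'] using
      hΦ t ht (s / t) ⟨div_pos hs ht, (div_lt_one ht).mpr hlt⟩

theorem div_le (hΦ : IsStrictlyLowerType p Φ) {s t : ℝ} (hs : 0 < s) (hst : s ≤ t) :
    Φ s / s ≤ Φ t / t ^ p * s ^ (p - 1) :=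
  calc Φ s / s ≤ (s / t) ^ p * Φ t / s := by gcongr; exact hΦ.le_rpow_mul hs hst
    _ = Φ t / t ^ p * s ^ (p - 1) := by
      rw [Real.div_rpow hs.le (hs.trans_le hst).le, Real.rpow_sub hs, Real.rpow_one]
      field_simp

theorem integrableOn_div (hΦ : IsStrictlyLowerType p Φ) (hp : 0 < p)
    (hpos : ∀ s ∈ Ioi (0:ℝ), 0 < Φ s) (hcont : ContinuousOn Φ (Ioi 0)) {t : ℝ} (ht : 0 < t) :
    IntegrableOn (fun s => Φ s / s) (Ioc 0 t) := by
  have hmajorant : IntegrableOn (fun s : ℝ => Φ t / t ^ p * s ^ (p - 1)) (Ioc 0 t) :=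
    (integrableOn_Ioc_rpow_sub_one hp ht.le).const_mul _
  have hmeas : AEStronglyMeasurable (fun s => Φ s / s) (volume.restrict (Ioc 0 t)) :=
    ((hcont.mono fun x hx => hx.1).div continuousOn_id fun x hx => hx.1.ne').aestronglyMeasurable
      measurableSet_Ioc
  refine hmajorant.mono' hmeas ?_
  filter_upwards [ae_restrict_mem measurableSet_Ioc] with s hs
  rw [Real.norm_eq_abs, abs_of_pos (div_pos (hpos s hs.1) hs.1)]
  exact hΦ.div_le hs.1 hs.2

theorem setIntegral_div_le (hΦ : IsStrictlyLowerType p Φ) (hp : 0 < p)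
    (hpos : ∀ s ∈ Ioi (0:ℝ), 0 < Φ s) (hcont : ContinuousOn Φ (Ioi 0)) {t : ℝ} (ht : 0 < t) :
    ∫ s in Ioc 0 t, Φ s / s ≤ Φ t / p := by
  have hrpow : ∫ s in Ioc 0 t, s ^ (p - 1) = t ^ p / p := by
    rw [← intervalIntegral.integral_of_le ht.le, integral_rpow (Or.inl (by linarith)),
      sub_add_cancel, Real.zero_rpow hp.ne', sub_zero]
  have htp : 0 < t ^ p := Real.rpow_pos_of_pos ht p
  calc ∫ s in Ioc 0 t, Φ s / s ≤ ∫ s in Ioc 0 t, Φ t / t ^ p * s ^ (p - 1) := by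
        refine setIntegral_mono_on (hΦ.integrableOn_div hp hpos hcont ht)
          ((integrableOn_Ioc_rpow_sub_one hp ht.le).const_mul _) measurableSet_Ioc
          fun s hs => hΦ.div_le hs.1 hs.2
    _ = Φ t / p := by rw [integral_const_mul, hrpow]; field_simp

end IsStrictlyLowerType

namespace IsUpperTypeOne

variable {C₁ : ℝ} {Φ : ℝ → ℝ}

theorem div_le_div (hΦ : IsUpperTypeOne C₁ Φ) (hC₁ : 0 < C₁) {s t : ℝ} (hs : 0 < s)
    (hst : s ≤ t) : Φ t / (C₁ * t) ≤ Φ s / s := by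
  have h := hΦ s hs (t / s) ((one_le_div hs).mpr hst)
  rw [mul_div_cancel₀ _ hs.ne'] at h
  calc Φ t / (C₁ * t) ≤ C₁ * (t / s) * Φ s / (C₁ * t) := by
        gcongr; exact (mul_pos hC₁ (hs.trans_le hst)).le
    _ = Φ s / s := by have := (hs.trans_le hst).ne'; field_simp

theorem div_le_setIntegral (hΦ : IsUpperTypeOne C₁ Φ) (hC₁ : 0 < C₁)
    (hpos : ∀ s ∈ Ioi (0:ℝ), 0 < Φ s) {t : ℝ} (ht : 0 < t)
    (hint : IntegrableOn (fun s => Φ s / s) (Ioc 0 t)) :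
    Φ t / (2 * C₁) ≤ ∫ s in Ioc 0 t, Φ s / s := by
  have hsub : Ioc (t / 2) t ⊆ Ioc 0 t := Ioc_subset_Ioc_left (by linarith)
  have hhalf : ∫ _ in Ioc (t / 2) t, Φ t / (C₁ * t) ≤ ∫ s in Ioc (t / 2) t, Φ s / s :=
    setIntegral_mono_on (integrableOn_const measure_Ioc_lt_top.ne) (hint.mono_set hsub)
      measurableSet_Ioc fun s hs => hΦ.div_le_div hC₁ (by linarith [hs.1]) hs.2
  rw [setIntegral_const, Real.volume_real_Ioc_of_le (by linarith), smul_eq_mul] at hhalf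
  calc Φ t / (2 * C₁) = (t - t / 2) * (Φ t / (C₁ * t)) := by field_simp; ring
    _ ≤ ∫ s in Ioc (t / 2) t, Φ s / s := hhalf
    _ ≤ ∫ s in Ioc 0 t, Φ s / s := by
      refine setIntegral_mono_set hint ?_ hsub.eventuallyLE
      filter_upwards [ae_restrict_mem measurableSet_Ioc] with s hs
      exact (div_pos (hpos s hs.1) hs.1).le

end IsUpperTypeOne

/-- For `Φ` continuous on `(0,∞)`, of upper type 1 with constant `C₁` and of
strictly lower type `p ∈ (0,1]`, there is `C ≥ 1` (depending only on `C₁` and `p`) such that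
for all `t > 0` the integral `∫₀ᵗ Φ(s)/s ds` is finite and comparable to `Φ(t)`. -/
theorem stmt1 (p C₁ : ℝ) (hp : p ∈ Set.Ioc (0:ℝ) 1) (hC₁ : 1 ≤ C₁) :
    ∃ C : ℝ, 1 ≤ C ∧
    ∀ Φ : ℝ → ℝ, (∀ t ∈ Set.Ioi (0:ℝ), 0 < Φ t) →
      ContinuousOn Φ (Set.Ioi 0) →
      (∀ s ∈ Set.Ioi (0:ℝ), ∀ t : ℝ, 1 ≤ t → Φ (s * t) ≤ C₁ * t * Φ s) →
      (∀ s ∈ Set.Ioi (0:ℝ), ∀ t ∈ Set.Ioo (0:ℝ) 1, Φ (s * t) ≤ t ^ p * Φ s) →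
      ∀ t ∈ Set.Ioi (0:ℝ),
        IntegrableOn (fun s => Φ s / s) (Set.Ioc 0 t) volume ∧
        C⁻¹ * Φ t ≤ (∫ s in Set.Ioc (0:ℝ) t, Φ s / s) ∧
        (∫ s in Set.Ioc (0:ℝ) t, Φ s / s) ≤ C * Φ t := by
  obtain ⟨hp0, hp1⟩ := hp
  refine ⟨2 * C₁ / p, by rw [le_div_iff₀ hp0]; linarith, ?_⟩
  intro Φ hpos hcont hupper hlower t ht
  have hΦt : 0 < Φ t := hpos t ht
  have hint := IsStrictlyLowerType.integrableOn_div hlower hp0 hpos hcont ht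
  refine ⟨hint, ?_, ?_⟩
  · calc (2 * C₁ / p)⁻¹ * Φ t = p * (Φ t / (2 * C₁)) := by rw [inv_div]; ring
      _ ≤ 1 * (Φ t / (2 * C₁)) := by gcongr
      _ ≤ _ := by
        rw [one_mul]
        exact IsUpperTypeOne.div_le_setIntegral hupper (by linarith) hpos ht hint
  · calc ∫ s in Ioc 0 t, Φ s / s ≤ Φ t / p :=
          IsStrictlyLowerType.setIntegral_div_le hlower hp0 hpos hcont ht
      _ = 1 * Φ t / p := by rw [one_mul]
      _ ≤ 2 * C₁ * Φ t / p := by gcongr; linarith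
      _ = 2 * C₁ / p * Φ t := by ring
end

section
/- Let 0 < p₀ ≤ p₁ ≤ 1 and let Φ : (0,∞) → (0,∞) be a continuous strictly increasing bijection of (0,∞) onto (0,∞); define ρ(t) := t^{-1}/Φ^{-1}(t^{-1}) for t ∈ (0,∞), where Φ^{-1} is the inverse function of Φ. Then Φ is of type (p₀,p₁) if and only if ρ is of type (p₁^{-1}−1, p₀^{-1}−1). -/
/-- `f` is of upper type `b`: there is `C ≥ 1` with `f(st) ≤ C t^b f(s)` for `t ≥ 1`, `s > 0`. -/
def OfUpperType (f : ℝ → ℝ) (b : ℝ) : Prop :=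
  ∃ C : ℝ, 1 ≤ C ∧ ∀ s ∈ Set.Ioi (0:ℝ), ∀ t : ℝ, 1 ≤ t → f (s * t) ≤ C * t ^ b * f s

/-- `f` is of lower type `a`: there is `C ≥ 1` with `f(st) ≤ C t^a f(s)` for `t ∈ (0,1]`, `s > 0`. -/
def OfLowerType (f : ℝ → ℝ) (a : ℝ) : Prop :=
  ∃ C : ℝ, 1 ≤ C ∧ ∀ s ∈ Set.Ioi (0:ℝ), ∀ t ∈ Set.Ioc (0:ℝ) 1, f (s * t) ≤ C * t ^ a * f s

private lemma alg_iff {u t A B C P : ℝ} (hu : 0 < u) (ht : 0 < t) (hA : 0 < A)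
    (hB : 0 < B) :
    u / t / A ≤ C * (P / t) * (u / B) ↔ B ≤ C * P * A := by
  rw [show C * (P / t) * (u / B) = (C * (P / t) * u) / B by ring,
    div_le_div_iff₀ hA hB,
    show C * (P / t) * u * A = (u / t) * (C * P * A) by field_simp,
    show u / t * B = (u / t) * B by ring]
  exact mul_le_mul_iff_of_pos_left (by positivity)

/-- Translation between the `ρ` inequality and the `Ψ` inequality. -/
private lemma rho_pt (Ψ : ℝ → ℝ) (hΨpos : ∀ x ∈ Set.Ioi (0:ℝ), 0 < Ψ x)
    {C q s t : ℝ} (hs : 0 < s) (ht : 0 < t) :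
    (s * t)⁻¹ / Ψ (s * t)⁻¹ ≤ C * t ^ (q - 1) * (s⁻¹ / Ψ s⁻¹) ↔
      Ψ s⁻¹ ≤ C * t ^ q * Ψ (s⁻¹ / t) := by
  have h1 : (s * t)⁻¹ = s⁻¹ / t := by rw [mul_inv, div_eq_mul_inv]
  have hA : 0 < Ψ (s⁻¹ / t) := hΨpos _ (Set.mem_Ioi.2 (by positivity))
  have hB : 0 < Ψ s⁻¹ := hΨpos _ (Set.mem_Ioi.2 (by positivity))
  rw [h1, Real.rpow_sub ht, Real.rpow_one]
  exact alg_iff (by positivity) ht hA hB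

private lemma keyPsi {p C : ℝ} (Φ Ψ : ℝ → ℝ)
    (hmono : StrictMonoOn Φ (Set.Ioi 0))
    (hΦpos : ∀ t ∈ Set.Ioi (0:ℝ), 0 < Φ t)
    (hΨpos : ∀ t ∈ Set.Ioi (0:ℝ), 0 < Ψ t)
    (hleft : ∀ t ∈ Set.Ioi (0:ℝ), Ψ (Φ t) = t)
    (hright : ∀ t ∈ Set.Ioi (0:ℝ), Φ (Ψ t) = t)
    (hp : 0 < p) (hC : 1 ≤ C) {u t : ℝ} (hu : 0 < u) (ht : 0 < t)
    (hstep : Φ (Ψ u * (C * t) ^ (-p⁻¹)) ≤ C * ((C * t) ^ (-p⁻¹)) ^ p * Φ (Ψ u)) :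
    Ψ u ≤ C ^ p⁻¹ * t ^ p⁻¹ * Ψ (u / t) := by
  have hC0 : (0:ℝ) < C := lt_of_lt_of_le one_pos hC
  have hCt : (0:ℝ) < C * t := mul_pos hC0 ht
  set θ := (C * t) ^ (-p⁻¹) with hθdef
  have hθ : 0 < θ := Real.rpow_pos_of_pos hCt _
  have hsΨ : 0 < Ψ u := hΨpos u hu
  have hut : 0 < u / t := by positivity
  have hΨut : 0 < Ψ (u / t) := hΨpos _ hut
  have Ψmono : ∀ x y : ℝ, 0 < x → 0 < y → x ≤ y → Ψ x ≤ Ψ y := by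
    intro x y hx hy hxy
    by_contra h
    push_neg at h
    have := hmono (hΨpos y hy) (hΨpos x hx) h
    rw [hright x hx, hright y hy] at this
    exact absurd hxy (not_le.2 this)
  have hθp : θ ^ p = (C * t)⁻¹ := by
    rw [hθdef, ← Real.rpow_mul hCt.le, show -p⁻¹ * p = -1 by field_simp,
      Real.rpow_neg_one]
  have hΦΨu : Φ (Ψ u) = u := hright u hu
  have hbd : Φ (Ψ u * θ) ≤ u / t := by
    calc Φ (Ψ u * θ) ≤ C * θ ^ p * Φ (Ψ u) := hstep
    _ = u / t := by rw [hθp, hΦΨu]; field_simp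
  have h1 : Ψ u * θ ≤ Ψ (u / t) := by
    have hpos : (0:ℝ) < Ψ u * θ := by positivity
    have := Ψmono _ _ (hΦpos _ hpos) hut hbd
    rwa [hleft _ hpos] at this
  have hθinv : θ⁻¹ = C ^ p⁻¹ * t ^ p⁻¹ := by
    rw [hθdef, Real.rpow_neg hCt.le, inv_inv, Real.mul_rpow hC0.le ht.le]
  calc Ψ u = Ψ u * θ * θ⁻¹ := by field_simp
  _ ≤ Ψ (u / t) * θ⁻¹ := mul_le_mul_of_nonneg_right h1 (by positivity)
  _ = C ^ p⁻¹ * t ^ p⁻¹ * Ψ (u / t) := by rw [hθinv]; ring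

private lemma keyPhi {p C : ℝ} (Φ Ψ : ℝ → ℝ)
    (hmono : StrictMonoOn Φ (Set.Ioi 0))
    (hΦpos : ∀ t ∈ Set.Ioi (0:ℝ), 0 < Φ t)
    (hΨpos : ∀ t ∈ Set.Ioi (0:ℝ), 0 < Ψ t)
    (hleft : ∀ t ∈ Set.Ioi (0:ℝ), Ψ (Φ t) = t)
    (hright : ∀ t ∈ Set.Ioi (0:ℝ), Φ (Ψ t) = t)
    (hp : 0 < p) (hC : 1 ≤ C) {s θ : ℝ} (hs : 0 < s) (hθ : 0 < θ)
    (hstep : Ψ (Φ s) ≤ C * ((C * θ) ^ (-p)) ^ p⁻¹ * Ψ (Φ s / (C * θ) ^ (-p))) :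
    Φ (s * θ) ≤ C ^ p * θ ^ p * Φ s := by
  have hC0 : (0:ℝ) < C := lt_of_lt_of_le one_pos hC
  have hCθ : (0:ℝ) < C * θ := mul_pos hC0 hθ
  have hu : 0 < Φ s := hΦpos s hs
  have hτp : ((C * θ) ^ (-p : ℝ)) ^ (p⁻¹ : ℝ) = (C * θ)⁻¹ := by
    rw [← Real.rpow_mul hCθ.le, show -p * p⁻¹ = -1 by field_simp,
      Real.rpow_neg_one]
  have hτinv : Φ s / (C * θ) ^ (-p : ℝ) = Φ s * (C * θ) ^ (p : ℝ) := by
    rw [Real.rpow_neg hCθ.le, div_eq_mul_inv, inv_inv]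
  have hv : 0 < Φ s * (C * θ) ^ (p : ℝ) := by
    have := Real.rpow_pos_of_pos hCθ p
    positivity
  rw [hτp, hτinv, hleft s hs] at hstep
  have h1 : s * θ ≤ Ψ (Φ s * (C * θ) ^ (p : ℝ)) := by
    have := mul_le_mul_of_nonneg_right hstep hθ.le
    calc s * θ ≤ C * (C * θ)⁻¹ * Ψ (Φ s * (C * θ) ^ (p : ℝ)) * θ := this
    _ = Ψ (Φ s * (C * θ) ^ (p : ℝ)) := by field_simp
  have hΨv : 0 < Ψ (Φ s * (C * θ) ^ (p : ℝ)) := hΨpos _ hv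
  have h2 : Φ (s * θ) ≤ Φ (Ψ (Φ s * (C * θ) ^ (p : ℝ))) := by
    rcases eq_or_lt_of_le h1 with h | h
    · rw [h]
    · exact (hmono (Set.mem_Ioi.2 (by positivity)) (Set.mem_Ioi.2 hΨv) h).le
  rw [hright _ hv] at h2
  calc Φ (s * θ) ≤ Φ s * (C * θ) ^ (p : ℝ) := h2
  _ = C ^ p * θ ^ p * Φ s := by rw [Real.mul_rpow hC0.le hθ.le]; ring

/-- For a continuous strictly increasing bijection `Φ` of `(0,∞)` onto itself with
inverse `Ψ`, and `ρ(t) := t⁻¹ / Φ⁻¹(t⁻¹)`, one has: `Φ` is of type `(p₀,p₁)` iff `ρ` is of type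
`(p₁⁻¹ − 1, p₀⁻¹ − 1)`. -/
theorem stmt2 (p₀ p₁ : ℝ) (h0 : 0 < p₀) (h01 : p₀ ≤ p₁) (h11 : p₁ ≤ 1)
    (Φ Ψ : ℝ → ℝ)
    (hcont : ContinuousOn Φ (Set.Ioi 0))
    (hmono : StrictMonoOn Φ (Set.Ioi 0))
    (hΦpos : ∀ t ∈ Set.Ioi (0:ℝ), 0 < Φ t)
    (hΨpos : ∀ t ∈ Set.Ioi (0:ℝ), 0 < Ψ t)
    (hleft : ∀ t ∈ Set.Ioi (0:ℝ), Ψ (Φ t) = t)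
    (hright : ∀ t ∈ Set.Ioi (0:ℝ), Φ (Ψ t) = t) :
    (OfLowerType Φ p₀ ∧ OfUpperType Φ p₁) ↔
      (OfLowerType (fun t => t⁻¹ / Ψ t⁻¹) (p₁⁻¹ - 1) ∧
        OfUpperType (fun t => t⁻¹ / Ψ t⁻¹) (p₀⁻¹ - 1)) := by
  have h1 : (0:ℝ) < p₁ := lt_of_lt_of_le h0 h01
  have Ψmono : ∀ x y : ℝ, 0 < x → 0 < y → x ≤ y → Ψ x ≤ Ψ y := by
    intro x y hx hy hxy
    by_contra h
    push_neg at h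
    have := hmono (hΨpos y (Set.mem_Ioi.2 hy)) (hΨpos x (Set.mem_Ioi.2 hx)) h
    rw [hright x hx, hright y hy] at this
    exact absurd hxy (not_le.2 this)
  have Φmono : ∀ x y : ℝ, 0 < x → 0 < y → x ≤ y → Φ x ≤ Φ y := by
    intro x y hx hy hxy
    rcases eq_or_lt_of_le hxy with h | h
    · rw [h]
    · exact (hmono hx hy h).le
  constructor
  · rintro ⟨⟨C₀, hC₀, hlow⟩, ⟨C₁, hC₁, hup⟩⟩
    have hC₀0 : (0:ℝ) < C₀ := lt_of_lt_of_le one_pos hC₀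
    have hC₁0 : (0:ℝ) < C₁ := lt_of_lt_of_le one_pos hC₁
    constructor
    · -- ρ lower type (p₁⁻¹ - 1), from Φ upper type p₁, constant C₁ ^ p₁⁻¹
      refine ⟨C₁ ^ (p₁⁻¹ : ℝ), ?_, ?_⟩
      · calc (1:ℝ) = 1 ^ (p₁⁻¹ : ℝ) := (Real.one_rpow _).symm
        _ ≤ C₁ ^ (p₁⁻¹ : ℝ) := Real.rpow_le_rpow zero_le_one hC₁ (by positivity)
      · intro s hs t ht
        have hs0 : 0 < s := hs
        have ht0 : 0 < t := ht.1
        rw [show ((fun t => t⁻¹ / Ψ t⁻¹) (s * t) ≤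
            C₁ ^ (p₁⁻¹:ℝ) * t ^ (p₁⁻¹ - 1) * ((fun t => t⁻¹ / Ψ t⁻¹) s)) =
            ((s * t)⁻¹ / Ψ (s * t)⁻¹ ≤ C₁ ^ (p₁⁻¹:ℝ) * t ^ (p₁⁻¹ - 1) * (s⁻¹ / Ψ s⁻¹)) from rfl,
          rho_pt Ψ hΨpos hs0 ht0]
        set u := s⁻¹ with hudef
        have hu : 0 < u := by positivity
        by_cases hcase : 1 ≤ C₁ * t
        · -- easy case : u ≤ u / t and constant ≥ 1
          have hle : Ψ u ≤ Ψ (u / t) :=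
            Ψmono u (u / t) hu (by positivity)
              (le_div_iff₀ ht0 |>.2 (mul_le_of_le_one_right hu.le ht.2))
          have hone : (1:ℝ) ≤ C₁ ^ (p₁⁻¹:ℝ) * t ^ (p₁⁻¹:ℝ) := by
            rw [← Real.mul_rpow hC₁0.le ht0.le]
            calc (1:ℝ) = 1 ^ (p₁⁻¹:ℝ) := (Real.one_rpow _).symm
            _ ≤ (C₁ * t) ^ (p₁⁻¹:ℝ) := Real.rpow_le_rpow zero_le_one hcase (by positivity)
          calc Ψ u ≤ Ψ (u / t) := hle
          _ = 1 * Ψ (u / t) := (one_mul _).symm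
          _ ≤ C₁ ^ (p₁⁻¹:ℝ) * t ^ (p₁⁻¹:ℝ) * Ψ (u / t) :=
              mul_le_mul_of_nonneg_right hone (hΨpos _ (Set.mem_Ioi.2 (by positivity))).le
        · push_neg at hcase
          apply keyPsi Φ Ψ hmono hΦpos hΨpos hleft hright h1 hC₁ hu ht0
          have hθ1 : 1 ≤ (C₁ * t) ^ (-(p₁⁻¹) : ℝ) :=
            Real.one_le_rpow_of_pos_of_le_one_of_nonpos (by positivity) hcase.le
              (by rw [neg_nonpos]; positivity)
          exact hup (Ψ u) (hΨpos u hu) _ hθ1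
    · -- ρ upper type (p₀⁻¹ - 1), from Φ lower type p₀, constant C₀ ^ p₀⁻¹
      refine ⟨C₀ ^ (p₀⁻¹ : ℝ), ?_, ?_⟩
      · calc (1:ℝ) = 1 ^ (p₀⁻¹ : ℝ) := (Real.one_rpow _).symm
        _ ≤ C₀ ^ (p₀⁻¹ : ℝ) := Real.rpow_le_rpow zero_le_one hC₀ (by positivity)
      · intro s hs t ht
        have hs0 : 0 < s := hs
        have ht0 : 0 < t := lt_of_lt_of_le one_pos ht
        rw [show ((fun t => t⁻¹ / Ψ t⁻¹) (s * t) ≤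
            C₀ ^ (p₀⁻¹:ℝ) * t ^ (p₀⁻¹ - 1) * ((fun t => t⁻¹ / Ψ t⁻¹) s)) =
            ((s * t)⁻¹ / Ψ (s * t)⁻¹ ≤ C₀ ^ (p₀⁻¹:ℝ) * t ^ (p₀⁻¹ - 1) * (s⁻¹ / Ψ s⁻¹)) from rfl,
          rho_pt Ψ hΨpos hs0 ht0]
        have hu : 0 < s⁻¹ := by positivity
        apply keyPsi Φ Ψ hmono hΦpos hΨpos hleft hright h0 hC₀ hu ht0
        have hCt1 : 1 ≤ C₀ * t := by nlinarith
        have hθ : (C₀ * t) ^ (-(p₀⁻¹) : ℝ) ∈ Set.Ioc (0:ℝ) 1 :=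
          ⟨Real.rpow_pos_of_pos (by positivity) _,
            Real.rpow_le_one_of_one_le_of_nonpos hCt1 (by rw [neg_nonpos]; positivity)⟩
        exact hlow (Ψ s⁻¹) (hΨpos _ hu) _ hθ
  · rintro ⟨⟨C₁, hC₁, hlow⟩, ⟨C₀, hC₀, hup⟩⟩
    have hC₀0 : (0:ℝ) < C₀ := lt_of_lt_of_le one_pos hC₀
    have hC₁0 : (0:ℝ) < C₁ := lt_of_lt_of_le one_pos hC₁
    -- translate ρ hypotheses to Ψ inequalities
    have hΨup : ∀ u : ℝ, 0 < u → ∀ t : ℝ, 1 ≤ t →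
        Ψ u ≤ C₀ * t ^ (p₀⁻¹ : ℝ) * Ψ (u / t) := by
      intro u hu t ht
      have ht0 : 0 < t := lt_of_lt_of_le one_pos ht
      have := hup u⁻¹ (by simpa using inv_pos.2 hu) t ht
      rw [show ((fun t => t⁻¹ / Ψ t⁻¹) (u⁻¹ * t) ≤
          C₀ * t ^ (p₀⁻¹ - 1) * ((fun t => t⁻¹ / Ψ t⁻¹) u⁻¹)) =
          ((u⁻¹ * t)⁻¹ / Ψ (u⁻¹ * t)⁻¹ ≤ C₀ * t ^ (p₀⁻¹ - 1) * (u⁻¹⁻¹ / Ψ u⁻¹⁻¹)) from rfl,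
        rho_pt Ψ hΨpos (inv_pos.2 hu) ht0, inv_inv] at this
      exact this
    have hΨlow : ∀ u : ℝ, 0 < u → ∀ t ∈ Set.Ioc (0:ℝ) 1,
        Ψ u ≤ C₁ * t ^ (p₁⁻¹ : ℝ) * Ψ (u / t) := by
      intro u hu t ht
      have := hlow u⁻¹ (by simpa using inv_pos.2 hu) t ht
      rw [show ((fun t => t⁻¹ / Ψ t⁻¹) (u⁻¹ * t) ≤
          C₁ * t ^ (p₁⁻¹ - 1) * ((fun t => t⁻¹ / Ψ t⁻¹) u⁻¹)) =
          ((u⁻¹ * t)⁻¹ / Ψ (u⁻¹ * t)⁻¹ ≤ C₁ * t ^ (p₁⁻¹ - 1) * (u⁻¹⁻¹ / Ψ u⁻¹⁻¹)) from rfl,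
        rho_pt Ψ hΨpos (inv_pos.2 hu) ht.1, inv_inv] at this
      exact this
    constructor
    · -- Φ lower type p₀ with constant C₀ ^ p₀
      refine ⟨C₀ ^ (p₀ : ℝ), ?_, ?_⟩
      · calc (1:ℝ) = 1 ^ (p₀:ℝ) := (Real.one_rpow _).symm
        _ ≤ C₀ ^ (p₀:ℝ) := Real.rpow_le_rpow zero_le_one hC₀ h0.le
      · intro s hs θ hθ
        have hs0 : 0 < s := hs
        have hθ0 : 0 < θ := hθ.1
        by_cases hcase : 1 ≤ C₀ * θ
        · have hle : Φ (s * θ) ≤ Φ s :=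
            Φmono _ _ (by positivity) hs0 (mul_le_of_le_one_right hs0.le hθ.2)
          have hone : (1:ℝ) ≤ C₀ ^ (p₀:ℝ) * θ ^ (p₀:ℝ) := by
            rw [← Real.mul_rpow hC₀0.le hθ0.le]
            calc (1:ℝ) = 1 ^ (p₀:ℝ) := (Real.one_rpow _).symm
            _ ≤ (C₀ * θ) ^ (p₀:ℝ) := Real.rpow_le_rpow zero_le_one hcase h0.le
          calc Φ (s * θ) ≤ Φ s := hle
          _ = 1 * Φ s := (one_mul _).symm
          _ ≤ C₀ ^ (p₀:ℝ) * θ ^ (p₀:ℝ) * Φ s :=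
              mul_le_mul_of_nonneg_right hone (hΦpos s hs0).le
        · push_neg at hcase
          apply keyPhi Φ Ψ hmono hΦpos hΨpos hleft hright h0 hC₀ hs0 hθ0
          have ht1 : 1 ≤ (C₀ * θ) ^ (-p₀ : ℝ) :=
            Real.one_le_rpow_of_pos_of_le_one_of_nonpos (by positivity) hcase.le
              (by linarith)
          exact hΨup (Φ s) (hΦpos s hs0) _ ht1
    · -- Φ upper type p₁ with constant C₁ ^ p₁
      refine ⟨C₁ ^ (p₁ : ℝ), ?_, ?_⟩
      · calc (1:ℝ) = 1 ^ (p₁:ℝ) := (Real.one_rpow _).symm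
        _ ≤ C₁ ^ (p₁:ℝ) := Real.rpow_le_rpow zero_le_one hC₁ h1.le
      · intro s hs θ hθ1
        have hs0 : 0 < s := hs
        have hθ0 : 0 < θ := lt_of_lt_of_le one_pos hθ1
        apply keyPhi Φ Ψ hmono hΦpos hΨpos hleft hright h1 hC₁ hs0 hθ0
        have hCθ1 : 1 ≤ C₁ * θ := by nlinarith
        have ht : (C₁ * θ) ^ (-p₁ : ℝ) ∈ Set.Ioc (0:ℝ) 1 :=
          ⟨Real.rpow_pos_of_pos (by positivity) _,
            Real.rpow_le_one_of_one_le_of_nonpos hCθ1 (by linarith)⟩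
        exact hΨlow (Φ s) (hΦpos s hs0) _ ht
end

section
/- Let (X,μ) be a measure space, p ∈ (0,1], and let Φ : [0,∞) → [0,∞) satisfy Φ(0) = 0, Φ nondecreasing, Φ subadditive (Φ(s+t) ≤ Φ(s) + Φ(t) for all s,t ≥ 0), and Φ of strictly lower type p, i.e. Φ(st) ≤ t^p Φ(s) for all t ∈ (0,1), s ∈ (0,∞). For measurable u : X → [0,∞] set ‖u‖_Φ := inf{λ ∈ (0,∞) : ∫_X Φ(u/λ) dμ ≤ 1}, with inf ∅ := ∞. Then for all measurable f, g : X → [0,∞], ‖f + g‖_Φ^p ≤ ‖f‖_Φ^p + ‖g‖_Φ^p. -/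
open MeasureTheory ENNReal

/-- Canonical extension of `Φ : [0,∞) → [0,∞)` to `[0,∞]`, sending `∞` to `∞`. -/
noncomputable def extPhi (Φ : ℝ → ℝ) : ℝ≥0∞ → ℝ≥0∞ :=
  fun s => if s = ⊤ then ⊤ else ENNReal.ofReal (Φ s.toReal)

/-- The Luxemburg functional `‖u‖_Φ := inf{λ ∈ (0,∞) : ∫ Φ(u/λ) dμ ≤ 1}`, with `inf ∅ = ∞`. -/
noncomputable def luxNorm {X : Type*} [MeasurableSpace X] (μ : Measure X) (Φ : ℝ → ℝ)
    (u : X → ℝ≥0∞) : ℝ≥0∞ :=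
  sInf {c : ℝ≥0∞ | 0 < c ∧ c ≠ ⊤ ∧ ∫⁻ x, extPhi Φ (u x / c) ∂μ ≤ 1}

lemma extPhi_mono (Φ : ℝ → ℝ) (hmono : MonotoneOn Φ (Set.Ici 0)) : Monotone (extPhi Φ) := by
  intro s t hst
  unfold extPhi
  rcases eq_or_ne t ⊤ with ht | ht
  · simp [ht]
  · have hs : s ≠ ⊤ := fun h => ht (top_le_iff.mp (h ▸ hst))
    rw [if_neg hs, if_neg ht]
    exact ENNReal.ofReal_le_ofReal
      (hmono ENNReal.toReal_nonneg ENNReal.toReal_nonneg (ENNReal.toReal_mono ht hst))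

lemma rpow_sInf_eq (S : Set ℝ≥0∞) {p : ℝ} (hp : 0 < p) : sInf S ^ p = ⨅ a ∈ S, a ^ p := by
  apply le_antisymm
  · exact le_iInf₂ fun a ha => ENNReal.rpow_le_rpow (sInf_le ha) hp.le
  · have h : (⨅ a ∈ S, a ^ p) ^ (1 / p) ≤ sInf S := by
      apply le_sInf; intro a ha
      have h2 := ENNReal.rpow_le_rpow (iInf₂_le a ha : (⨅ a ∈ S, a ^ p) ≤ a ^ p)
        (by positivity : (0:ℝ) ≤ 1 / p)
      rwa [← ENNReal.rpow_mul, mul_one_div_cancel hp.ne', ENNReal.rpow_one] at h2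
    calc (⨅ a ∈ S, a ^ p) = ((⨅ a ∈ S, a ^ p) ^ (1 / p)) ^ p := by
          rw [← ENNReal.rpow_mul, one_div_mul_cancel hp.ne', ENNReal.rpow_one]
      _ ≤ sInf S ^ p := ENNReal.rpow_le_rpow h hp.le

/-- For `Φ` with `Φ(0)=0`, nondecreasing, subadditive and of strictly lower type
`p ∈ (0,1]`, the Luxemburg functional satisfies `‖f+g‖_Φ^p ≤ ‖f‖_Φ^p + ‖g‖_Φ^p`. -/
theorem stmt3 {X : Type*} [MeasurableSpace X] (μ : Measure X)
    (p : ℝ) (hp : p ∈ Set.Ioc (0:ℝ) 1)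
    (Φ : ℝ → ℝ) (hΦ0 : Φ 0 = 0) (hnonneg : ∀ t : ℝ, 0 ≤ t → 0 ≤ Φ t)
    (hmono : MonotoneOn Φ (Set.Ici 0))
    (hsub : ∀ s : ℝ, 0 ≤ s → ∀ t : ℝ, 0 ≤ t → Φ (s + t) ≤ Φ s + Φ t)
    (hlow : ∀ s ∈ Set.Ioi (0:ℝ), ∀ t ∈ Set.Ioo (0:ℝ) 1, Φ (s * t) ≤ t ^ p * Φ s)
    (f g : X → ℝ≥0∞) (hf : Measurable f) (hg : Measurable g) :
    luxNorm μ Φ (fun x => f x + g x) ^ p ≤ luxNorm μ Φ f ^ p + luxNorm μ Φ g ^ p := by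
  obtain ⟨hp0, hp1⟩ := hp
  set Sf := {c : ℝ≥0∞ | 0 < c ∧ c ≠ ⊤ ∧ ∫⁻ x, extPhi Φ (f x / c) ∂μ ≤ 1} with hSf
  set Sg := {c : ℝ≥0∞ | 0 < c ∧ c ≠ ⊤ ∧ ∫⁻ x, extPhi Φ (g x / c) ∂μ ≤ 1} with hSg
  have key : ∀ a ∈ Sf, ∀ b ∈ Sg,
      luxNorm μ Φ (fun x => f x + g x) ^ p ≤ a ^ p + b ^ p := by
    rintro a ⟨ha0, haT, haI⟩ b ⟨hb0, hbT, hbI⟩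
    set c := (a ^ p + b ^ p) ^ (1 / p) with hc
    have hapT : a ^ p ≠ ⊤ := (ENNReal.rpow_lt_top_of_nonneg hp0.le haT).ne
    have hbpT : b ^ p ≠ ⊤ := (ENNReal.rpow_lt_top_of_nonneg hp0.le hbT).ne
    have hsumT : a ^ p + b ^ p ≠ ⊤ := ENNReal.add_ne_top.mpr ⟨hapT, hbpT⟩
    have hap0 : 0 < a ^ p := ENNReal.rpow_pos ha0 haT
    have hbp0 : 0 < b ^ p := ENNReal.rpow_pos hb0 hbT
    have hsum0 : 0 < a ^ p + b ^ p := lt_of_lt_of_le hap0 le_self_add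
    have hcT : c ≠ ⊤ := (ENNReal.rpow_lt_top_of_nonneg (by positivity) hsumT).ne
    have hc0 : 0 < c := ENNReal.rpow_pos hsum0 hsumT
    have hcp : c ^ p = a ^ p + b ^ p := by
      rw [hc, ← ENNReal.rpow_mul, one_div_mul_cancel hp0.ne', ENNReal.rpow_one]
    have hac : a < c := by
      by_contra h
      have h2 := ENNReal.rpow_le_rpow (not_lt.mp h) hp0.le
      rw [hcp] at h2
      exact absurd h2 (not_le.mpr (ENNReal.lt_add_right hapT hbp0.ne'))
    have hbc : b < c := by
      by_contra h
      have h2 := ENNReal.rpow_le_rpow (not_lt.mp h) hp0.le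
      rw [hcp] at h2
      exact absurd h2 (not_le.mpr (by rw [add_comm]; exact ENNReal.lt_add_right hbpT hap0.ne'))
    set A := a.toReal with hA
    set B := b.toReal with hB
    set C := c.toReal with hC
    have hA0 : 0 < A := ENNReal.toReal_pos ha0.ne' haT
    have hB0 : 0 < B := ENNReal.toReal_pos hb0.ne' hbT
    have hC0 : 0 < C := ENNReal.toReal_pos hc0.ne' hcT
    have hAC : A < C := ENNReal.toReal_strict_mono hcT hac
    have hBC : B < C := ENNReal.toReal_strict_mono hcT hbc
    -- real-valued step
    have hstep : ∀ s : ℝ, 0 ≤ s → ∀ A' : ℝ, 0 < A' → A' < C →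
        Φ (s / C) ≤ (A' / C) ^ p * Φ (s / A') := by
      intro s hs A' hA' hA'C
      rcases eq_or_lt_of_le hs with h0 | hs0
      · rw [← h0, zero_div, zero_div, hΦ0, mul_zero]
      · have hmem : A' / C ∈ Set.Ioo (0:ℝ) 1 := ⟨div_pos hA' hC0, (div_lt_one hC0).mpr hA'C⟩
        have h2 := hlow (s / A') (div_pos hs0 hA') (A' / C) hmem
        calc Φ (s / C) = Φ (s / A' * (A' / C)) := by
              rw [div_mul_div_comm, mul_comm A' C, mul_div_mul_right _ _ hA'.ne']
          _ ≤ (A' / C) ^ p * Φ (s / A') := h2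
    -- identities for coefficients
    have hacR : a / c = ENNReal.ofReal (A / C) := by
      rw [← ENNReal.toReal_div, ENNReal.ofReal_toReal ((ENNReal.div_lt_top haT hc0.ne').ne)]
    have hbcR : b / c = ENNReal.ofReal (B / C) := by
      rw [← ENNReal.toReal_div, ENNReal.ofReal_toReal ((ENNReal.div_lt_top hbT hc0.ne').ne)]
    have hcoef1 : (a / c) ^ p = ENNReal.ofReal ((A / C) ^ p) := by
      rw [hacR, ENNReal.ofReal_rpow_of_pos (div_pos hA0 hC0)]
    have hcoef2 : (b / c) ^ p = ENNReal.ofReal ((B / C) ^ p) := by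
      rw [hbcR, ENNReal.ofReal_rpow_of_pos (div_pos hB0 hC0)]
    have hcoef1_ne : (a / c) ^ p ≠ 0 :=
      (ENNReal.rpow_pos (ENNReal.div_pos ha0.ne' hcT) ((ENNReal.div_lt_top haT hc0.ne').ne)).ne'
    have hcoef2_ne : (b / c) ^ p ≠ 0 :=
      (ENNReal.rpow_pos (ENNReal.div_pos hb0.ne' hcT) ((ENNReal.div_lt_top hbT hc0.ne').ne)).ne'
    -- pointwise inequality
    have hpt : ∀ x, extPhi Φ ((f x + g x) / c) ≤
        (a / c) ^ p * extPhi Φ (f x / a) + (b / c) ^ p * extPhi Φ (g x / b) := by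
      intro x
      rcases eq_or_ne (f x) ⊤ with hfx | hfx
      · have : extPhi Φ (f x / a) = ⊤ := by
          rw [hfx, ENNReal.top_div_of_ne_top haT]; simp [extPhi]
        rw [this, ENNReal.mul_top hcoef1_ne]
        simp
      rcases eq_or_ne (g x) ⊤ with hgx | hgx
      · have : extPhi Φ (g x / b) = ⊤ := by
          rw [hgx, ENNReal.top_div_of_ne_top hbT]; simp [extPhi]
        rw [this, ENNReal.mul_top hcoef2_ne]
        simp
      · set s := (f x).toReal with hs
        set t := (g x).toReal with ht
        have hs0 : 0 ≤ s := ENNReal.toReal_nonneg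
        have ht0 : 0 ≤ t := ENNReal.toReal_nonneg
        have hsumx : f x + g x ≠ ⊤ := ENNReal.add_ne_top.mpr ⟨hfx, hgx⟩
        have e1 : extPhi Φ ((f x + g x) / c) = ENNReal.ofReal (Φ ((s + t) / C)) := by
          rw [extPhi, if_neg ((ENNReal.div_lt_top hsumx hc0.ne').ne), ENNReal.toReal_div,
            ENNReal.toReal_add hfx hgx]
        have e2 : extPhi Φ (f x / a) = ENNReal.ofReal (Φ (s / A)) := by
          rw [extPhi, if_neg ((ENNReal.div_lt_top hfx ha0.ne').ne), ENNReal.toReal_div]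
        have e3 : extPhi Φ (g x / b) = ENNReal.ofReal (Φ (t / B)) := by
          rw [extPhi, if_neg ((ENNReal.div_lt_top hgx hb0.ne').ne), ENNReal.toReal_div]
        have hreal : Φ ((s + t) / C) ≤ (A / C) ^ p * Φ (s / A) + (B / C) ^ p * Φ (t / B) := by
          calc Φ ((s + t) / C) = Φ (s / C + t / C) := by rw [add_div]
            _ ≤ Φ (s / C) + Φ (t / C) := hsub _ (by positivity) _ (by positivity)
            _ ≤ (A / C) ^ p * Φ (s / A) + (B / C) ^ p * Φ (t / B) :=
                add_le_add (hstep s hs0 A hA0 hAC) (hstep t ht0 B hB0 hBC)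
        rw [e1, e2, e3, hcoef1, hcoef2,
          ← ENNReal.ofReal_mul (by positivity), ← ENNReal.ofReal_mul (by positivity),
          ← ENNReal.ofReal_add (mul_nonneg (by positivity) (hnonneg _ (by positivity)))
            (mul_nonneg (by positivity) (hnonneg _ (by positivity)))]
        exact ENNReal.ofReal_le_ofReal hreal
    -- measurability
    have hF1 : Measurable fun x => extPhi Φ (f x / a) :=
      (extPhi_mono Φ hmono).measurable.comp (hf.div measurable_const)
    have hF2 : Measurable fun x => extPhi Φ (g x / b) :=
      (extPhi_mono Φ hmono).measurable.comp (hg.div measurable_const)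
    have hint : ∫⁻ x, extPhi Φ ((f x + g x) / c) ∂μ ≤ 1 := by
      calc ∫⁻ x, extPhi Φ ((f x + g x) / c) ∂μ
          ≤ ∫⁻ x, ((a / c) ^ p * extPhi Φ (f x / a) + (b / c) ^ p * extPhi Φ (g x / b)) ∂μ :=
            lintegral_mono hpt
        _ = (a / c) ^ p * ∫⁻ x, extPhi Φ (f x / a) ∂μ
            + (b / c) ^ p * ∫⁻ x, extPhi Φ (g x / b) ∂μ := by
            rw [lintegral_add_left (hF1.const_mul _), lintegral_const_mul _ hF1,
              lintegral_const_mul _ hF2]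
        _ ≤ (a / c) ^ p * 1 + (b / c) ^ p * 1 :=
            add_le_add (mul_le_mul_right haI _) (mul_le_mul_right hbI _)
        _ = 1 := by
            rw [mul_one, mul_one, ENNReal.div_rpow_of_nonneg _ _ hp0.le,
              ENNReal.div_rpow_of_nonneg _ _ hp0.le, ENNReal.div_add_div_same, hcp,
              ENNReal.div_self hsum0.ne' hsumT]
    have hmem : c ∈ {d : ℝ≥0∞ | 0 < d ∧ d ≠ ⊤ ∧ ∫⁻ x, extPhi Φ ((f x + g x) / d) ∂μ ≤ 1} :=
      ⟨hc0, hcT, hint⟩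
    have hle : luxNorm μ Φ (fun x => f x + g x) ≤ c := sInf_le hmem
    calc luxNorm μ Φ (fun x => f x + g x) ^ p ≤ c ^ p := ENNReal.rpow_le_rpow hle hp0.le
      _ = a ^ p + b ^ p := hcp
  have hrf : luxNorm μ Φ f ^ p = ⨅ a ∈ Sf, a ^ p := rpow_sInf_eq Sf hp0
  have hrg : luxNorm μ Φ g ^ p = ⨅ b ∈ Sg, b ^ p := rpow_sInf_eq Sg hp0
  rw [hrf, hrg]
  have hsplit : (⨅ a ∈ Sf, a ^ p) + (⨅ b ∈ Sg, b ^ p)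
      = ⨅ a ∈ Sf, ⨅ b ∈ Sg, (a ^ p + b ^ p) := by
    simp_rw [ENNReal.iInf_add, ENNReal.add_iInf]
  rw [hsplit]
  exact le_iInf₂ fun a ha => le_iInf₂ fun b hb => key a ha b hb
end

section
/- Let n ≥ 1, let φ : ℝ^{n−1} → ℝ be Lipschitz with constant M, and let Ω := {(x′,x_n) ∈ ℝ^{n−1}×ℝ : x_n > φ(x′)} be the associated special Lipschitz domain. Then there exists C > 0, depending only on n and M, such that for every cube Q = Q(x_Q, l) with 2Q ⊂ Ω and 4Q ∩ ∂Ω ≠ ∅ (∂Ω the topological boundary of Ω), there exists a cube Q̃ of the same sidelength l with Q̃ ⊂ ℝⁿ ∖ Ω and l/2 ≤ dist(Q, Q̃) ≤ C l, where dist is taken in the sup-norm. -/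
/-- reflected cubes for special Lipschitz domains. Here `ℝⁿ = ℝ^{n-1} × ℝ` carries
the sup-norm, the cube `Q(x,l)` is the closed ball of radius `l/2`, so `2Q = closedBall x l`
and `4Q = closedBall x (2l)`; `dist(Q,Q̃)` is the infimum of distances of points. There is
`C > 0`, depending only on `n` and the Lipschitz constant `M`, such that any cube `Q` with
`2Q ⊂ Ω` and `4Q ∩ ∂Ω ≠ ∅` admits a reflected cube `Q̃ ⊂ Ωᶜ` of the same sidelength with
`l/2 ≤ dist(Q,Q̃) ≤ C l`. -/
theorem stmt6 (n : ℕ) (hn : 1 ≤ n) (M : NNReal) :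
    ∃ C : ℝ, 0 < C ∧
      ∀ φ : (Fin (n-1) → ℝ) → ℝ, LipschitzWith M φ →
      ∀ (xQ : (Fin (n-1) → ℝ) × ℝ) (l : ℝ), 0 < l →
        Metric.closedBall xQ l ⊆ {y : (Fin (n-1) → ℝ) × ℝ | φ y.1 < y.2} →
        (Metric.closedBall xQ (2 * l) ∩
          frontier {y : (Fin (n-1) → ℝ) × ℝ | φ y.1 < y.2}).Nonempty →
        ∃ x' : (Fin (n-1) → ℝ) × ℝ,
          Metric.closedBall x' (l / 2) ⊆ {y : (Fin (n-1) → ℝ) × ℝ | φ y.1 < y.2}ᶜ ∧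
          l / 2 ≤ sInf (Set.image2 dist (Metric.closedBall xQ (l / 2))
            (Metric.closedBall x' (l / 2))) ∧
          sInf (Set.image2 dist (Metric.closedBall xQ (l / 2))
            (Metric.closedBall x' (l / 2))) ≤ C * l := by
  have hM : (0:ℝ) ≤ (M:ℝ) := M.coe_nonneg
  refine ⟨3 * ((M:ℝ) + 1), by positivity, ?_⟩
  intro φ hφ xQ l hl h2Q h4Q
  set Ω := {y : (Fin (n-1) → ℝ) × ℝ | φ y.1 < y.2} with hΩdef
  have hopen : IsOpen Ω := by
    have : Ω = {y : (Fin (n-1) → ℝ) × ℝ | φ y.1 < y.2} := rfl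
    rw [this]
    exact isOpen_lt (hφ.continuous.comp continuous_fst) continuous_snd
  -- the bottom face of 2Q is in Ω
  have h1 : φ xQ.1 < xQ.2 - l := by
    have hmem : ((xQ.1, xQ.2 - l) : (Fin (n-1) → ℝ) × ℝ) ∈ Metric.closedBall xQ l := by
      rw [Metric.mem_closedBall, Prod.dist_eq]
      simp only [dist_self, Real.dist_eq]
      rw [show xQ.2 - l - xQ.2 = -l by ring, abs_neg, abs_of_pos hl]
      exact max_le hl.le le_rfl
    exact h2Q hmem
  -- frontier point
  obtain ⟨z, hz4, hzf⟩ := h4Q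
  have hznot : ¬ φ z.1 < z.2 := by
    have : z ∉ interior Ω := hzf.2
    rwa [hopen.interior_eq] at this
  have hzd : dist z xQ ≤ 2 * l := Metric.mem_closedBall.mp hz4
  rw [Prod.dist_eq, max_le_iff] at hzd
  have hz2 : |z.2 - xQ.2| ≤ 2 * l := by rw [← Real.dist_eq]; exact hzd.2
  have hlip : φ z.1 - φ xQ.1 ≤ (M:ℝ) * (2 * l) := by
    have := hφ.dist_le_mul z.1 xQ.1
    have h := le_trans (le_abs_self _) (le_trans (le_of_eq (Real.dist_eq _ _).symm) this)
    exact le_trans h (by nlinarith [hzd.1])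
  have hlow : xQ.2 - 2 * l - (M:ℝ) * (2 * l) ≤ φ xQ.1 := by
    have hz2' : xQ.2 - 2 * l ≤ z.2 := by
      have := abs_le.mp hz2
      linarith [this.1]
    have : z.2 ≤ φ z.1 := not_lt.mp hznot
    linarith
  -- reflected cube center
  set b : ℝ := φ xQ.1 - ((M:ℝ) + 1) * l / 2 with hbdef
  refine ⟨(xQ.1, b), ?_, ?_, ?_⟩
  · -- cube below the graph
    intro y hy
    rw [Metric.mem_closedBall, Prod.dist_eq, max_le_iff] at hy
    have hy2 : |y.2 - b| ≤ l / 2 := by rw [← Real.dist_eq]; exact hy.2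
    have hlip' : φ xQ.1 - φ y.1 ≤ (M:ℝ) * (l / 2) := by
      have := hφ.dist_le_mul xQ.1 y.1
      have h := le_trans (le_abs_self _) (le_trans (le_of_eq (Real.dist_eq _ _).symm) this)
      have hd : dist xQ.1 y.1 ≤ l / 2 := by rw [dist_comm]; exact hy.1
      exact le_trans h (by nlinarith)
    have : y.2 ≤ φ y.1 := by
      have := abs_le.mp hy2
      have hb : y.2 ≤ b + l / 2 := by linarith [this.2]
      have : b + l / 2 = φ xQ.1 - (M:ℝ) * l / 2 := by rw [hbdef]; ring
      nlinarith
    exact fun hmem => (not_lt.2 this) hmem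
  · -- lower bound on distance
    refine le_csInf ⟨dist xQ (xQ.1, b), Set.mem_image2_of_mem
      (Metric.mem_closedBall_self (by linarith)) (Metric.mem_closedBall_self (by linarith))⟩ ?_
    rintro d ⟨p, hp, q, hq, rfl⟩
    rw [Metric.mem_closedBall, Prod.dist_eq, max_le_iff] at hp hq
    have hp2 : |p.2 - xQ.2| ≤ l / 2 := by rw [← Real.dist_eq]; exact hp.2
    have hq2 : |q.2 - b| ≤ l / 2 := by rw [← Real.dist_eq]; exact hq.2
    have hgap : 3 * l / 2 ≤ xQ.2 - b := by
      rw [hbdef]; nlinarith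
    have h2 : l / 2 ≤ |p.2 - q.2| := by
      have h1 := abs_le.mp hp2
      have h2 := abs_le.mp hq2
      have : l / 2 ≤ p.2 - q.2 := by linarith
      exact le_trans this (le_abs_self _)
    calc l / 2 ≤ |p.2 - q.2| := h2
      _ = dist p.2 q.2 := (Real.dist_eq _ _).symm
      _ ≤ dist p q := by rw [Prod.dist_eq]; exact le_max_right _ _
  · -- upper bound
    have hbdd : BddBelow (Set.image2 dist (Metric.closedBall xQ (l / 2))
        (Metric.closedBall (((xQ.1, b)) : (Fin (n-1) → ℝ) × ℝ) (l / 2))) := by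
      refine ⟨0, ?_⟩
      rintro d ⟨p, _, q, _, rfl⟩
      exact dist_nonneg
    have hmem : dist xQ ((xQ.1, b) : (Fin (n-1) → ℝ) × ℝ) ∈
        Set.image2 dist (Metric.closedBall xQ (l / 2))
          (Metric.closedBall (((xQ.1, b)) : (Fin (n-1) → ℝ) × ℝ) (l / 2)) :=
      Set.mem_image2_of_mem (Metric.mem_closedBall_self (by linarith))
        (Metric.mem_closedBall_self (by linarith))
    refine le_trans (csInf_le hbdd hmem) ?_
    have : dist xQ ((xQ.1, b) : (Fin (n-1) → ℝ) × ℝ) = |xQ.2 - b| := by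
      rw [Prod.dist_eq]
      simp [Real.dist_eq, abs_nonneg]
    rw [this]
    have hpos : 0 ≤ xQ.2 - b := by rw [hbdef]; nlinarith
    rw [abs_of_nonneg hpos, hbdef]
    nlinarith
end

section
/- Let n ≥ 1, d ∈ (0,∞], c₀ ∈ (0,1], α ∈ (0,1) and C_• : [1,∞) → [0,∞). Then there exists a constant C, depending only on n, α, c₀ and C_•, with the following property. Let Ω ⊂ ℝⁿ be open with |Q(x,t) ∩ Ω| ≥ c₀ tⁿ for all x ∈ Ω and all t ∈ (0,∞) with t < d. Let u : Ω×(0,d) → ℂ be jointly measurable such that for each t the map y ↦ u(y,t) is differentiable with jointly measurable spatial gradient ∇u, and suppose that for every c ∈ [1,∞), x₀ ∈ Ω, r ∈ (0,∞) and t₀ ∈ (0,∞) with 4cr² < t₀² and t₀ ≤ d one has the Caccioppoli-type inequality ∫_{√(t₀²−cr²)}^{t₀} ∫_{Q(x₀,r)∩Ω} t|∇u(y,t)|² dy dt ≤ (C_•(c)/r²) ∫_{√(t₀²−4cr²)}^{t₀} ∫_{Q(x₀,2r)∩Ω} t|u(y,t)|² dy dt. Then for every x ∈ Ω and all ε, R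 with 0 < ε < R < d: ( ∫∫_{{(y,t) ∈ Ω×(ε,R) : ‖y−x‖_∞ < αt}} |t∇u(y,t)|² dy dt/(t|Q(x,t)∩Ω|) )^{1/2} ≤ C (1 + ln(R/ε))^{1/2} · sup{ |u(y,t)| : y ∈ Ω, t ∈ (0,d), ‖y−x‖_∞ < t }. -/
/-!
Split the truncated cone into the layers `a < t ≤ γ a`, where `γ² = 1 + ρ²` and
`ρ = (1 - α) / 10`; there are at most `⌈log (R / ε) / log γ⌉` of them. On one layer the lower
density of `Ω` bounds the weight `1 / (t |Q(x, t) ∩ Ω|)` by `1 / (c₀ aⁿ)`, and the cross-section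
of the cone is covered by boundedly many cubes of side `ρ a` centred in it. The Caccioppoli
inequality with `c = 1`, `r = ρ a`, `t₀ = γ a` bounds the integral of `t |∇u|²` over such a cube
times `[a, γ a]` by `aⁿ` times the supremum of `|u|²` over the doubled cylinder, and that cylinder
lies in the cone of aperture one because `α γ + ρ < √(γ² - 4 ρ²)`. So each layer contributes
`O(𝒩(u)(x)²)`, and all of them together `O((1 + log (R / ε)) 𝒩(u)(x)²)`.
-/

open MeasureTheory ENNReal Metric Set

theorem lintegral_biUnion_finset_le {α ι : Type*} [MeasurableSpace α] (μ : Measure α)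
    (s : Finset ι) (t : ι → Set α) (f : α → ℝ≥0∞) :
    ∫⁻ a in ⋃ i ∈ s, t i, f a ∂μ ≤ ∑ i ∈ s, ∫⁻ a in t i, f a ∂μ := by
  classical
  induction s using Finset.induction with
  | empty => simp
  | insert a s ha ih =>
    rw [Finset.set_biUnion_insert, Finset.sum_insert ha]
    exact (lintegral_union_le _ _ _).trans (add_le_add_right ih _)

theorem setLIntegral_le_mul_measure {X : Type*} [MeasurableSpace X] {μ : Measure X} {s : Set X}
    {f : X → ℝ≥0∞} {c : ℝ≥0∞} (hf : ∀ x ∈ s, f x ≤ c) : ∫⁻ x in s, f x ∂μ ≤ c * μ s :=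
  (setLIntegral_mono measurable_const hf).trans_eq (setLIntegral_const s c)

theorem Ioo_subset_biUnion_Ioc_div_pow {γ ε R : ℝ} (hγ : 1 < γ) (hε : 0 < ε) :
    Ioo ε R ⊆ ⋃ k ∈ Finset.range ⌈Real.log (R / ε) / Real.log γ⌉₊,
      Ioc (R / γ ^ (k + 1)) (R / γ ^ k) := by
  rintro t ⟨hεt, htR⟩
  have ht : 0 < t := hε.trans hεt
  obtain ⟨k, hk, hk1⟩ := exists_nat_pow_near ((one_le_div ht).2 htR.le) hγ
  have hkL : k * Real.log γ < Real.log (R / ε) := by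
    rw [← Real.log_pow]
    exact Real.log_lt_log (by positivity)
      (hk.trans_lt (div_lt_div_of_pos_left (ht.trans htR) hε hεt))
  refine mem_iUnion₂.2 ⟨k, Finset.mem_range.2 (Nat.lt_ceil.2 ?_), ?_, ?_⟩
  · rwa [lt_div_iff₀ (Real.log_pos hγ)]
  · rwa [div_lt_iff₀ (by positivity), ← div_lt_iff₀' ht]
  · rwa [le_div_iff₀ (by positivity), mul_comm, ← le_div_iff₀ ht]

theorem setLIntegral_le_of_geometric_layers {X : Type*} [MeasurableSpace X] {μ : Measure X}
    {S : Set X} {τ : X → ℝ} {f : X → ℝ≥0∞} {γ ε R : ℝ} {B : ℝ≥0∞} (hγ : 1 < γ) (hε : 0 < ε)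
    (hεR : ε < R) (hS : ∀ q ∈ S, τ q ∈ Ioo ε R)
    (hB : ∀ a, 0 < a → γ * a ≤ R → ∫⁻ q in S ∩ τ ⁻¹' Ioc a (γ * a), f q ∂μ ≤ B) :
    ∫⁻ q in S, f q ∂μ ≤ ⌈Real.log (R / ε) / Real.log γ⌉₊ * B := by
  have hR : 0 < R := hε.trans hεR
  have hγa : ∀ k : ℕ, γ * (R / γ ^ (k + 1)) = R / γ ^ k := fun k => by
    rw [pow_succ]; field_simp
  have hcover : S ⊆ ⋃ k ∈ Finset.range ⌈Real.log (R / ε) / Real.log γ⌉₊,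
      S ∩ τ ⁻¹' Ioc (R / γ ^ (k + 1)) (γ * (R / γ ^ (k + 1))) := fun q hq => by
    obtain ⟨k, hk, hqk⟩ := mem_iUnion₂.1 (Ioo_subset_biUnion_Ioc_div_pow hγ hε (hS q hq))
    exact mem_biUnion hk ⟨hq, by rwa [mem_preimage, hγa]⟩
  calc ∫⁻ q in S, f q ∂μ ≤ _ := lintegral_mono_set hcover
    _ ≤ _ := lintegral_biUnion_finset_le _ _ _ _
    _ ≤ ∑ _k ∈ Finset.range ⌈Real.log (R / ε) / Real.log γ⌉₊, B :=
        Finset.sum_le_sum fun k _ => hB _ (by positivity) <| by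
          rw [hγa]; exact div_le_self hR.le (one_le_pow₀ hγ.le)
    _ = _ := by simp

theorem exists_int_grid_near {n : ℕ} (x y : Fin n → ℝ) {h : ℝ} (hh : 0 < h) :
    ∃ k : Fin n → ℤ, dist y (fun i => x i + h * k i) ≤ h / 2 ∧
      ∀ i, |(k i : ℝ)| ≤ dist y x / h + 1 / 2 := by
  refine ⟨fun i => round ((y i - x i) / h), ?_, fun i => ?_⟩
  · refine (dist_pi_le_iff (by positivity)).2 fun i => ?_
    have hround := abs_sub_round ((y i - x i) / h)
    rw [Real.dist_eq, show y i - (x i + h * round ((y i - x i) / h)) =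
      h * ((y i - x i) / h - round ((y i - x i) / h)) by field_simp; ring, abs_mul,
      abs_of_pos hh]
    nlinarith
  · have hyx : |y i - x i| ≤ dist y x := by
      rw [← Real.dist_eq]; exact dist_le_pi_dist y x i
    calc |(round ((y i - x i) / h) : ℝ)|
        ≤ |(y i - x i) / h| + |(y i - x i) / h - round ((y i - x i) / h)| := by
          simpa using abs_sub ((y i - x i) / h) ((y i - x i) / h - round ((y i - x i) / h))
      _ ≤ dist y x / h + 1 / 2 := by
          rw [abs_div, abs_of_pos hh]
          gcongr
          exact abs_sub_round _

theorem exists_finset_subset_covering {n : ℕ} {A : Set (Fin n → ℝ)} {x : Fin n → ℝ} {ρ h : ℝ}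
    {K : ℕ} (hh : 0 < h) (hK : ρ ≤ K * h) (hA : A ⊆ closedBall x ρ) :
    ∃ Z : Finset (Fin n → ℝ), ↑Z ⊆ A ∧ A ⊆ ⋃ z ∈ Z, closedBall z h ∧
      Z.card ≤ (2 * K + 1) ^ n := by
  classical
  let cell : (Fin n → ℤ) → Set (Fin n → ℝ) := fun k => closedBall (fun i => x i + h * k i) (h / 2)
  let pick : (Fin n → ℤ) → Fin n → ℝ := fun k =>
    if hk : (A ∩ cell k).Nonempty then hk.some else x
  have hpick : ∀ k, (A ∩ cell k).Nonempty → pick k ∈ A ∩ cell k := fun k hk => by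
    simpa only [pick, dif_pos hk] using hk.some_mem
  let box := Fintype.piFinset fun _ : Fin n => Finset.Icc (-(K : ℤ)) K
  refine ⟨(box.filter fun k => (A ∩ cell k).Nonempty).image pick, ?_, ?_, ?_⟩
  · intro z hz
    obtain ⟨k, hk, rfl⟩ := Finset.mem_image.1 hz
    exact (hpick k (Finset.mem_filter.1 hk).2).1
  · intro y hy
    obtain ⟨k, hyk, hk⟩ := exists_int_grid_near x y hh
    have hkbox : k ∈ box := Fintype.mem_piFinset.2 fun i => by
      have hki : |(k i : ℝ)| < K + 1 := by
        have := (mem_closedBall.1 (hA hy)).trans hK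
        have : dist y x / h ≤ K := by rwa [div_le_iff₀ hh]
        linarith [hk i]
      rw [Finset.mem_Icc, ← abs_le]
      exact Int.lt_add_one_iff.1 (by exact_mod_cast hki)
    have hne : (A ∩ cell k).Nonempty := ⟨y, hy, hyk⟩
    refine mem_biUnion (Finset.mem_image_of_mem _ (Finset.mem_filter.2 ⟨hkbox, hne⟩)) ?_
    have := mem_closedBall.1 (hpick k hne).2
    rw [mem_closedBall]
    linarith [dist_triangle_right y (pick k) (fun i => x i + h * k i)]
  · calc _ ≤ (box.filter fun k => (A ∩ cell k).Nonempty).card := Finset.card_image_le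
      _ ≤ box.card := Finset.card_filter_le _ _
      _ = (2 * K + 1) ^ n := by
          simp only [box, Fintype.card_piFinset, Int.card_Icc, Finset.prod_const,
            Finset.card_univ, Fintype.card_fin]
          congr 1
          omega

-- For `r = ρ a` and `t₀ = γ a`, the window `[√(t₀² - r²), t₀]` of the Caccioppoli inequality is
-- the layer `[a, γ a]`, and its enlarged window starts at `√(γ² - 4 ρ²) a`.
theorem exists_layer_parameters {α : ℝ} (hα₀ : 0 ≤ α) (hα₁ : α < 1) :
    ∃ ρ γ : ℝ, 0 < ρ ∧ 1 < γ ∧ γ ^ 2 = 1 + ρ ^ 2 ∧ 4 * ρ ^ 2 < γ ^ 2 ∧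
      α * γ + ρ < √(γ ^ 2 - 4 * ρ ^ 2) := by
  set ρ := (1 - α) / 10 with hρ_def
  have hρ : 0 < ρ := by positivity
  have hρ₁ : ρ ≤ 1 / 10 := by linarith
  have hγ : √(1 + ρ ^ 2) ^ 2 = 1 + ρ ^ 2 := Real.sq_sqrt (by positivity)
  refine ⟨ρ, √(1 + ρ ^ 2), hρ, (Real.lt_sqrt zero_le_one).2 (by nlinarith), hγ, by nlinarith, ?_⟩
  have hγ_le : √(1 + ρ ^ 2) ≤ 1 + ρ ^ 2 := Real.sqrt_le_iff.2 ⟨by positivity, by nlinarith⟩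
  have hθ : 1 - 3 * ρ ^ 2 ≤ √(√(1 + ρ ^ 2) ^ 2 - 4 * ρ ^ 2) :=
    Real.le_sqrt_of_sq_le (by rw [hγ]; nlinarith [mul_le_mul_of_nonneg_left hρ₁ (sq_nonneg ρ)])
  nlinarith [mul_le_mul_of_nonneg_left hγ_le hα₀]

theorem natCeil_div_mul_le {L ℓ C : ℝ} (hL : 0 ≤ L) (hℓ : 0 < ℓ) (hC : 0 ≤ C) :
    (⌈L / ℓ⌉₊ : ℝ) * C ≤ (C * (1 / ℓ + 1) + 1) * (1 + L) := by
  have hceil : (⌈L / ℓ⌉₊ : ℝ) ≤ L / ℓ + 1 := (Nat.ceil_lt_add_one (by positivity)).le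
  have hgap : (C * (1 / ℓ + 1) + 1) * (1 + L) - (L / ℓ + 1) * C = C / ℓ + C * L + 1 + L := by
    field_simp
    ring
  nlinarith [div_nonneg hC hℓ.le, mul_nonneg hC hL]

section SquareFunction

variable {n : ℕ}

noncomputable def nontangentialMax (Ω : Set (Fin n → ℝ)) (d : ℝ≥0∞) (u : (Fin n → ℝ) → ℝ → ℂ)
    (x : Fin n → ℝ) : ℝ≥0∞ :=
  ⨆ (y : Fin n → ℝ) (_ : y ∈ Ω) (t : ℝ) (_ : 0 < t ∧ ENNReal.ofReal t < d ∧ dist y x < t),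
    (‖u y t‖₊ : ℝ≥0∞)

def CaccioppoliEstimate (Ω : Set (Fin n → ℝ)) (d : ℝ≥0∞) (u : (Fin n → ℝ) → ℝ → ℂ)
    (g : (Fin n → ℝ) → ℝ → Fin n → ℂ) (Cb : ℝ → ℝ) : Prop :=
  ∀ c : ℝ, 1 ≤ c → ∀ x₀ ∈ Ω, ∀ r t₀ : ℝ, 0 < r → 0 < t₀ →
    4 * c * r ^ 2 < t₀ ^ 2 → ENNReal.ofReal t₀ ≤ d →
    (∫⁻ t in Icc (Real.sqrt (t₀ ^ 2 - c * r ^ 2)) t₀,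
        ∫⁻ y in closedBall x₀ (r / 2) ∩ Ω,
          ENNReal.ofReal (t * ∑ i, Complex.normSq (g y t i))) ≤
      ENNReal.ofReal (Cb c / r ^ 2) *
        ∫⁻ t in Icc (Real.sqrt (t₀ ^ 2 - 4 * c * r ^ 2)) t₀,
          ∫⁻ y in closedBall x₀ r ∩ Ω,
            ENNReal.ofReal (t * Complex.normSq (u y t))

def cone (Ω : Set (Fin n → ℝ)) (x : Fin n → ℝ) (α : ℝ) (I : Set ℝ) :
    Set ((Fin n → ℝ) × ℝ) :=
  {q | q.1 ∈ Ω ∧ q.2 ∈ I ∧ dist q.1 x < α * q.2}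

theorem cone_inter_preimage_snd_subset {Ω : Set (Fin n → ℝ)} {x : Fin n → ℝ} {α : ℝ}
    (I J : Set ℝ) : cone Ω x α I ∩ Prod.snd ⁻¹' J ⊆ cone Ω x α J :=
  fun _ hq => ⟨hq.1.1, hq.2, hq.1.2.2⟩

-- In the sup metric of `Fin n → ℝ`, `closedBall x (t / 2)` is the cube `Q(x, t)`.
def HasLowerDensity (Ω : Set (Fin n → ℝ)) (c₀ : ℝ) (d : ℝ≥0∞) : Prop :=
  ∀ x ∈ Ω, ∀ t : ℝ, 0 < t → ENNReal.ofReal t < d →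
    ENNReal.ofReal (c₀ * t ^ n) ≤ volume (closedBall x (t / 2) ∩ Ω)

variable {Ω : Set (Fin n → ℝ)} {d : ℝ≥0∞} {u : (Fin n → ℝ) → ℝ → ℂ}
  {g : (Fin n → ℝ) → ℝ → Fin n → ℂ} {Cb : ℝ → ℝ}

theorem enorm_le_nontangentialMax {x y : Fin n → ℝ} {t : ℝ} (hy : y ∈ Ω) (ht : 0 < t)
    (htd : ENNReal.ofReal t < d) (hyx : dist y x < t) :
    (‖u y t‖₊ : ℝ≥0∞) ≤ nontangentialMax Ω d u x :=
  le_iSup₂_of_le y hy <| le_iSup₂_of_le (f := fun t (_ : 0 < t ∧ _ ∧ _) => _) t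
    ⟨ht, htd, hyx⟩ le_rfl

theorem ofReal_mul_normSq_le {t s : ℝ} {w : ℂ} {M : ℝ≥0∞} (ht : 0 ≤ t) (hts : t ≤ s)
    (hw : (‖w‖₊ : ℝ≥0∞) ≤ M) :
    ENNReal.ofReal (t * Complex.normSq w) ≤ ENNReal.ofReal s * M ^ 2 := by
  rw [Complex.normSq_eq_norm_sq, ENNReal.ofReal_mul ht, ENNReal.ofReal_pow (norm_nonneg _),
    ofReal_norm]
  exact mul_le_mul' (ENNReal.ofReal_le_ofReal hts) (pow_le_pow_left' hw 2)

theorem lintegral_normSq_le_nontangentialMax {x z : Fin n → ℝ} {r s t₀ : ℝ} (hr : 0 ≤ r)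
    (ht₀ : 0 ≤ t₀) (hzx : dist z x + r < s) (ht₀d : ENNReal.ofReal t₀ < d) :
    ∫⁻ t in Icc s t₀, ∫⁻ y in closedBall z r ∩ Ω, ENNReal.ofReal (t * Complex.normSq (u y t)) ≤
      ENNReal.ofReal (t₀ * (2 * r) ^ n * t₀) * nontangentialMax Ω d u x ^ 2 := by
  set N := nontangentialMax Ω d u x
  have hu : ∀ t ∈ Icc s t₀, ∀ y ∈ closedBall z r ∩ Ω,
      ENNReal.ofReal (t * Complex.normSq (u y t)) ≤ ENNReal.ofReal t₀ * N ^ 2 := by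
    rintro t ⟨hst, htt₀⟩ y ⟨hyz, hy⟩
    have hyx : dist y x < t := by
      linarith [dist_triangle y z x, mem_closedBall.1 hyz]
    have ht : 0 < t := dist_nonneg.trans_lt hyx
    exact ofReal_mul_normSq_le ht.le htt₀ <|
      enorm_le_nontangentialMax hy ht ((ENNReal.ofReal_le_ofReal htt₀).trans_lt ht₀d) hyx
  calc _ ≤ ENNReal.ofReal t₀ * N ^ 2 * ENNReal.ofReal ((2 * r) ^ n) * volume (Icc s t₀) :=
        setLIntegral_le_mul_measure fun t ht =>
          (setLIntegral_le_mul_measure (hu t ht)).trans <| by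
            gcongr
            exact (measure_mono inter_subset_left).trans_eq
              (by simp [Real.volume_pi_closedBall z hr])
    _ ≤ ENNReal.ofReal t₀ * N ^ 2 * ENNReal.ofReal ((2 * r) ^ n) * ENNReal.ofReal t₀ := by
        rw [Real.volume_Icc]
        gcongr
        linarith [dist_nonneg (x := z) (y := x)]
    _ = _ := by
        rw [ENNReal.ofReal_mul (by positivity), ENNReal.ofReal_mul (by positivity)]
        ring

theorem lintegral_gradient_le_nontangentialMax (hCacc : CaccioppoliEstimate Ω d u g Cb)
    {x z : Fin n → ℝ} (hz : z ∈ Ω) {r t₀ : ℝ} (hr : 0 < r) (hrt₀ : 4 * r ^ 2 < t₀ ^ 2)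
    (ht₀ : 0 < t₀) (ht₀d : ENNReal.ofReal t₀ < d)
    (hzx : dist z x + r < √(t₀ ^ 2 - 4 * r ^ 2)) :
    ∫⁻ t in Icc √(t₀ ^ 2 - r ^ 2) t₀, ∫⁻ y in closedBall z (r / 2) ∩ Ω,
        ENNReal.ofReal (t * ∑ i, Complex.normSq (g y t i)) ≤
      ENNReal.ofReal (max (Cb 1) 0 * t₀ ^ 2 * (2 * r) ^ n / r ^ 2) *
        nontangentialMax Ω d u x ^ 2 := by
  have hCacc1 := hCacc 1 le_rfl z hz r t₀ hr ht₀ (by linarith) ht₀d.le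
  simp only [one_mul, mul_one] at hCacc1
  calc _ ≤ ENNReal.ofReal (Cb 1 / r ^ 2) *
          (ENNReal.ofReal (t₀ * (2 * r) ^ n * t₀) * nontangentialMax Ω d u x ^ 2) :=
        hCacc1.trans <| mul_le_mul_right
          (lintegral_normSq_le_nontangentialMax hr.le ht₀.le hzx ht₀d) _
    _ ≤ ENNReal.ofReal (max (Cb 1) 0 / r ^ 2) *
          (ENNReal.ofReal (t₀ * (2 * r) ^ n * t₀) * nontangentialMax Ω d u x ^ 2) := by
        gcongr
        exact le_max_left _ _
    _ = _ := by
        rw [← mul_assoc, ← ENNReal.ofReal_mul (by positivity)]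
        congr 2
        ring

theorem measurable_ofReal_mul_sum_normSq (hg : Measurable fun q : (Fin n → ℝ) × ℝ => g q.1 q.2) :
    Measurable fun q : (Fin n → ℝ) × ℝ =>
      ENNReal.ofReal (q.2 * ∑ i, Complex.normSq (g q.1 q.2 i)) :=
  ENNReal.measurable_ofReal.comp <| measurable_snd.mul <| Finset.measurable_sum _ fun i _ =>
    Complex.continuous_normSq.measurable.comp ((measurable_pi_apply i).comp hg)

theorem setLIntegral_layer_cylinder_le (hg : Measurable fun q : (Fin n → ℝ) × ℝ => g q.1 q.2)
    (hCacc : CaccioppoliEstimate Ω d u g Cb) {x z : Fin n → ℝ} (hz : z ∈ Ω) {α ρ γ a : ℝ}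
    (hρ : 0 < ρ) (hγρ : γ ^ 2 = 1 + ρ ^ 2) (hργ : 4 * ρ ^ 2 < γ ^ 2)
    (hαγρ : α * γ + ρ < √(γ ^ 2 - 4 * ρ ^ 2)) (ha : 0 < a) (hγa : 0 < γ * a)
    (had : ENNReal.ofReal (γ * a) < d) (hzx : dist z x < α * (γ * a)) :
    ∫⁻ q in (closedBall z (ρ * a / 2) ∩ Ω) ×ˢ Icc a (γ * a),
        ENNReal.ofReal (q.2 * ∑ i, Complex.normSq (g q.1 q.2 i)) ≤
      ENNReal.ofReal (max (Cb 1) 0 * γ ^ 2 * (2 * ρ) ^ n / ρ ^ 2 * a ^ n) *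
        nontangentialMax Ω d u x ^ 2 := by
  have hlow : √((γ * a) ^ 2 - (ρ * a) ^ 2) = a := by
    rw [show (γ * a) ^ 2 - (ρ * a) ^ 2 = a ^ 2 by linear_combination a ^ 2 * hγρ,
      Real.sqrt_sq ha.le]
  have hhigh : √((γ * a) ^ 2 - 4 * (ρ * a) ^ 2) = √(γ ^ 2 - 4 * ρ ^ 2) * a := by
    rw [show (γ * a) ^ 2 - 4 * (ρ * a) ^ 2 = (γ ^ 2 - 4 * ρ ^ 2) * a ^ 2 by ring,
      Real.sqrt_mul (by linarith), Real.sqrt_sq ha.le]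
  have hcone : dist z x + ρ * a < √((γ * a) ^ 2 - 4 * (ρ * a) ^ 2) := by
    rw [hhigh]
    nlinarith
  have hcyl := lintegral_gradient_le_nontangentialMax hCacc hz (by positivity)
    (by have := pow_pos ha 2; nlinarith) hγa had hcone
  rw [hlow] at hcyl
  rw [Measure.volume_eq_prod, ← Measure.prod_restrict,
    lintegral_prod_symm _ (measurable_ofReal_mul_sum_normSq hg).aemeasurable]
  convert hcyl using 3
  field_simp
  ring

theorem exists_cone_layer_covering {x : Fin n → ℝ} {α a b r : ℝ} {K : ℕ} (ha : 0 ≤ a)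
    (hr : 0 < r) (hK : α * b ≤ K * (r / 2)) :
    ∃ Z : Finset (Fin n → ℝ), (∀ z ∈ Z, z ∈ Ω ∧ dist z x < α * b) ∧ Z.card ≤ (2 * K + 1) ^ n ∧
      cone Ω x α (Ioc a b) ⊆ ⋃ z ∈ Z, (closedBall z (r / 2) ∩ Ω) ×ˢ Icc a b := by
  obtain ⟨Z, hZA, hAZ, hZcard⟩ := exists_finset_subset_covering (A := ball x (α * b) ∩ Ω)
    (by positivity) hK fun y hy => ball_subset_closedBall hy.1
  refine ⟨Z, fun z hz => ⟨(hZA hz).2, mem_ball.1 (hZA hz).1⟩, hZcard, ?_⟩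
  rintro ⟨y, t⟩ ⟨hy, ⟨hat, htb⟩, hyx⟩
  have hα : 0 ≤ α := by
    by_contra! hα
    nlinarith [dist_nonneg (x := y) (y := x), mul_neg_of_neg_of_pos hα (ha.trans_lt hat)]
  obtain ⟨z, hz, hyz⟩ := mem_iUnion₂.1 (hAZ ⟨mem_ball.2 (hyx.trans_le (by gcongr)), hy⟩)
  exact mem_iUnion₂.2 ⟨z, hz, ⟨hyz, hy⟩, hat.le, htb⟩

theorem squareFunctionWeight_le {c₀ : ℝ} (hdens : HasLowerDensity Ω c₀ d) {x : Fin n → ℝ}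
    (hx : x ∈ Ω) (hc₀ : 0 ≤ c₀) {a t G : ℝ} (ha : 0 < a) (hat : a ≤ t)
    (htd : ENNReal.ofReal t < d) :
    ENNReal.ofReal (t ^ 2 * G) / (ENNReal.ofReal t * volume (closedBall x (t / 2) ∩ Ω)) ≤
      ENNReal.ofReal (t * G) / ENNReal.ofReal (c₀ * a ^ n) := by
  have ht : 0 < t := ha.trans_le hat
  rw [sq, mul_assoc, ENNReal.ofReal_mul ht.le,
    ENNReal.mul_div_mul_left _ _ (ENNReal.ofReal_pos.2 ht).ne' ENNReal.ofReal_ne_top]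
  refine ENNReal.div_le_div_left ((ENNReal.ofReal_le_ofReal ?_).trans (hdens x hx t ht htd)) _
  gcongr

theorem setLIntegral_cone_layer_le {c₀ α : ℝ} (hdens : HasLowerDensity Ω c₀ d)
    (hg : Measurable fun q : (Fin n → ℝ) × ℝ => g q.1 q.2) (hCacc : CaccioppoliEstimate Ω d u g Cb)
    {x : Fin n → ℝ} (hx : x ∈ Ω) (hc₀ : 0 < c₀) {ρ γ : ℝ} {K : ℕ} (hρ : 0 < ρ) (hγ : 0 < γ)
    (hγρ : γ ^ 2 = 1 + ρ ^ 2) (hργ : 4 * ρ ^ 2 < γ ^ 2) (hαγρ : α * γ + ρ < √(γ ^ 2 - 4 * ρ ^ 2))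
    (hK : 2 * α * γ ≤ K * ρ) {a : ℝ} (ha : 0 < a) (had : ENNReal.ofReal (γ * a) < d) :
    ∫⁻ q in cone Ω x α (Ioc a (γ * a)),
        ENNReal.ofReal (q.2 ^ 2 * ∑ i, Complex.normSq (g q.1 q.2 i)) /
          (ENNReal.ofReal q.2 * volume (closedBall x (q.2 / 2) ∩ Ω)) ≤
      ENNReal.ofReal ((2 * K + 1) ^ n * (max (Cb 1) 0 * γ ^ 2 * (2 * ρ) ^ n / ρ ^ 2) / c₀) *
        nontangentialMax Ω d u x ^ 2 := by
  set N := nontangentialMax Ω d u x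
  set Y := max (Cb 1) 0 * γ ^ 2 * (2 * ρ) ^ n / ρ ^ 2
  have hKa : α * (γ * a) ≤ K * (ρ * a / 2) := by
    nlinarith [mul_le_mul_of_nonneg_right hK ha.le]
  obtain ⟨Z, hZ, hZcard, hsub⟩ := exists_cone_layer_covering (Ω := Ω) ha.le (by positivity) hKa
  have hcyl := fun z hz => setLIntegral_layer_cylinder_le (Cb := Cb) hg hCacc (hZ z hz).1 hρ hγρ
    hργ hαγρ ha (by positivity) had (hZ z hz).2
  calc _ ≤ ∫⁻ q in cone Ω x α (Ioc a (γ * a)),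
          ENNReal.ofReal (q.2 * ∑ i, Complex.normSq (g q.1 q.2 i)) *
            (ENNReal.ofReal (c₀ * a ^ n))⁻¹ :=
        setLIntegral_mono ((measurable_ofReal_mul_sum_normSq hg).mul_const _) fun q hq =>
          squareFunctionWeight_le hdens hx hc₀.le ha hq.2.1.1.le
            ((ENNReal.ofReal_le_ofReal hq.2.1.2).trans_lt had)
    _ = (∫⁻ q in cone Ω x α (Ioc a (γ * a)),
          ENNReal.ofReal (q.2 * ∑ i, Complex.normSq (g q.1 q.2 i))) *
            (ENNReal.ofReal (c₀ * a ^ n))⁻¹ :=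
        lintegral_mul_const' _ _ (ENNReal.inv_ne_top.2 (by simp; positivity))
    _ ≤ (Z.card * (ENNReal.ofReal (Y * a ^ n) * N ^ 2)) * (ENNReal.ofReal (c₀ * a ^ n))⁻¹ := by
        gcongr
        calc _ ≤ _ := lintegral_mono_set hsub
          _ ≤ _ := lintegral_biUnion_finset_le _ _ _ _
          _ ≤ _ := by
            rw [← nsmul_eq_mul]
            exact Finset.sum_le_card_nsmul _ _ _ hcyl
    _ ≤ ((2 * K + 1) ^ n * (ENNReal.ofReal (Y * a ^ n) * N ^ 2)) *
          (ENNReal.ofReal (c₀ * a ^ n))⁻¹ := by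
        gcongr
        exact_mod_cast hZcard
    _ = ENNReal.ofReal ((2 * K + 1) ^ n) * ENNReal.ofReal (Y * a ^ n) *
          ENNReal.ofReal (c₀ * a ^ n)⁻¹ * N ^ 2 := by
        have hP : ENNReal.ofReal ((2 * K + 1) ^ n) = (2 * K + 1) ^ n := by
          exact_mod_cast ENNReal.ofReal_natCast ((2 * K + 1) ^ n)
        rw [ENNReal.ofReal_inv_of_pos (by positivity), hP]
        ring
    _ = _ := by
        rw [← ENNReal.ofReal_mul (by positivity), ← ENNReal.ofReal_mul (by positivity)]
        congr 2
        field_simp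

end SquareFunction

theorem stmt8_general (n : ℕ) (d : ℝ≥0∞)
    (c₀ α : ℝ) (hc₀ : c₀ ∈ Set.Ioc (0:ℝ) 1) (hα : α ∈ Set.Ioo (0:ℝ) 1)
    (Cb : ℝ → ℝ) :
    ∃ C : ℝ, 0 < C ∧
    ∀ (Ω : Set (Fin n → ℝ)), IsOpen Ω →
    (∀ x ∈ Ω, ∀ t : ℝ, 0 < t → ENNReal.ofReal t < d →
        ENNReal.ofReal (c₀ * t ^ n) ≤ volume (Metric.closedBall x (t / 2) ∩ Ω)) →
    ∀ (u : (Fin n → ℝ) → ℝ → ℂ) (g : (Fin n → ℝ) → ℝ → Fin n → ℂ),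
      Measurable (fun q : (Fin n → ℝ) × ℝ => u q.1 q.2) →
      Measurable (fun q : (Fin n → ℝ) × ℝ => g q.1 q.2) →
      (∀ t : ℝ, 0 < t → ENNReal.ofReal t < d → ∀ y ∈ Ω, ∀ i,
        HasDerivAt (fun s => u (Function.update y i s) t) (g y t i) (y i)) →
      (∀ c : ℝ, 1 ≤ c → ∀ x₀ ∈ Ω, ∀ r t₀ : ℝ, 0 < r → 0 < t₀ →
        4 * c * r ^ 2 < t₀ ^ 2 → ENNReal.ofReal t₀ ≤ d →
        (∫⁻ t in Set.Icc (Real.sqrt (t₀ ^ 2 - c * r ^ 2)) t₀,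
            ∫⁻ y in Metric.closedBall x₀ (r / 2) ∩ Ω,
              ENNReal.ofReal (t * ∑ i, Complex.normSq (g y t i))) ≤
          ENNReal.ofReal (Cb c / r ^ 2) *
            ∫⁻ t in Set.Icc (Real.sqrt (t₀ ^ 2 - 4 * c * r ^ 2)) t₀,
              ∫⁻ y in Metric.closedBall x₀ r ∩ Ω,
                ENNReal.ofReal (t * Complex.normSq (u y t))) →
      ∀ x ∈ Ω, ∀ ε R : ℝ, 0 < ε → ε < R → ENNReal.ofReal R < d →
        (∫⁻ q in {q : (Fin n → ℝ) × ℝ | q.1 ∈ Ω ∧ q.2 ∈ Set.Ioo ε R ∧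
              dist q.1 x < α * q.2},
            ENNReal.ofReal (q.2 ^ 2 * ∑ i, Complex.normSq (g q.1 q.2 i)) /
              (ENNReal.ofReal q.2 * volume (Metric.closedBall x (q.2 / 2) ∩ Ω)))
          ^ (1/2 : ℝ) ≤
        ENNReal.ofReal (C * Real.sqrt (1 + Real.log (R / ε))) *
          ⨆ (y : Fin n → ℝ) (_ : y ∈ Ω) (t : ℝ)
            (_ : 0 < t ∧ ENNReal.ofReal t < d ∧ dist y x < t), (‖u y t‖₊ : ℝ≥0∞) := by
  obtain ⟨ρ, γ, hρ, hγ, hγρ, hργ, hαγρ⟩ := exists_layer_parameters hα.1.le hα.2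
  set K := ⌈2 * α * γ / ρ⌉₊
  have hK : 2 * α * γ ≤ K * ρ := (div_le_iff₀ hρ).1 (Nat.le_ceil _)
  set C₁ := (2 * K + 1) ^ n * (max (Cb 1) 0 * γ ^ 2 * (2 * ρ) ^ n / ρ ^ 2) / c₀
  have hC₁ : 0 ≤ C₁ := by have := hc₀.1; positivity
  have hlogγ := Real.log_pos hγ
  refine ⟨√(C₁ * (1 / Real.log γ + 1) + 1), Real.sqrt_pos.2 (by positivity), ?_⟩
  intro Ω _ hdens u g _ hg _ hCacc x hx ε R hε hεR hRd
  set N := nontangentialMax Ω d u x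
  have hlayers := setLIntegral_le_of_geometric_layers (S := cone Ω x α (Ioo ε R)) (τ := Prod.snd)
    (B := ENNReal.ofReal C₁ * N ^ 2) hγ hε hεR (fun q hq => hq.2.1) fun a ha haR =>
      (lintegral_mono_set (cone_inter_preimage_snd_subset _ _)).trans <|
        setLIntegral_cone_layer_le hdens hg hCacc hx hc₀.1 hρ (by linarith) hγρ hργ hαγρ hK ha
          ((ENNReal.ofReal_le_ofReal haR).trans_lt hRd)
  rw [one_div, ENNReal.rpow_inv_le_iff two_pos, ENNReal.rpow_two]
  have hL : 0 ≤ Real.log (R / ε) := Real.log_nonneg ((one_le_div hε).2 hεR.le)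
  calc _ ≤ _ := hlayers
    _ = ENNReal.ofReal (⌈Real.log (R / ε) / Real.log γ⌉₊ * C₁) * N ^ 2 := by
      rw [ENNReal.ofReal_mul (Nat.cast_nonneg _), ENNReal.ofReal_natCast, mul_assoc]
    _ ≤ ENNReal.ofReal ((C₁ * (1 / Real.log γ + 1) + 1) * (1 + Real.log (R / ε))) * N ^ 2 :=
      mul_le_mul' (ENNReal.ofReal_le_ofReal (natCeil_div_mul_le hL hlogγ hC₁)) le_rfl
    _ = _ := by
      rw [mul_pow, ← ENNReal.ofReal_pow (by positivity), mul_pow, Real.sq_sqrt (by positivity),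
        Real.sq_sqrt (by positivity)]
      rfl

/-- truncated conical square function of `t∇u` controlled by the nontangential
maximal function, `≲ (1 + ln(R/ε))^{1/2} 𝒩(u)(x)`, under a measure-density assumption on `Ω`
and a Caccioppoli-type assumption on `u`. `ℝⁿ = Fin n → ℝ` carries the sup-norm, so the cube
`Q(x,t)` is `closedBall x (t/2)`; `g` plays the role of the spatial gradient `∇u`. The
constant `C` depends only on `n`, `d`, `c₀`, `α` and the function `C_•`. -/
theorem stmt8 (n : ℕ) (hn : 1 ≤ n) (d : ℝ≥0∞) (hd : 0 < d)
    (c₀ α : ℝ) (hc₀ : c₀ ∈ Set.Ioc (0:ℝ) 1) (hα : α ∈ Set.Ioo (0:ℝ) 1)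
    (Cb : ℝ → ℝ) (hCb : ∀ c : ℝ, 1 ≤ c → 0 ≤ Cb c) :
    ∃ C : ℝ, 0 < C ∧
    ∀ (Ω : Set (Fin n → ℝ)), IsOpen Ω →
    (∀ x ∈ Ω, ∀ t : ℝ, 0 < t → ENNReal.ofReal t < d →
        ENNReal.ofReal (c₀ * t ^ n) ≤ volume (Metric.closedBall x (t / 2) ∩ Ω)) →
    ∀ (u : (Fin n → ℝ) → ℝ → ℂ) (g : (Fin n → ℝ) → ℝ → Fin n → ℂ),
      Measurable (fun q : (Fin n → ℝ) × ℝ => u q.1 q.2) →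
      Measurable (fun q : (Fin n → ℝ) × ℝ => g q.1 q.2) →
      (∀ t : ℝ, 0 < t → ENNReal.ofReal t < d → ∀ y ∈ Ω, ∀ i,
        HasDerivAt (fun s => u (Function.update y i s) t) (g y t i) (y i)) →
      (∀ c : ℝ, 1 ≤ c → ∀ x₀ ∈ Ω, ∀ r t₀ : ℝ, 0 < r → 0 < t₀ →
        4 * c * r ^ 2 < t₀ ^ 2 → ENNReal.ofReal t₀ ≤ d →
        (∫⁻ t in Set.Icc (Real.sqrt (t₀ ^ 2 - c * r ^ 2)) t₀,
            ∫⁻ y in Metric.closedBall x₀ (r / 2) ∩ Ω,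
              ENNReal.ofReal (t * ∑ i, Complex.normSq (g y t i))) ≤
          ENNReal.ofReal (Cb c / r ^ 2) *
            ∫⁻ t in Set.Icc (Real.sqrt (t₀ ^ 2 - 4 * c * r ^ 2)) t₀,
              ∫⁻ y in Metric.closedBall x₀ r ∩ Ω,
                ENNReal.ofReal (t * Complex.normSq (u y t))) →
      ∀ x ∈ Ω, ∀ ε R : ℝ, 0 < ε → ε < R → ENNReal.ofReal R < d →
        (∫⁻ q in {q : (Fin n → ℝ) × ℝ | q.1 ∈ Ω ∧ q.2 ∈ Set.Ioo ε R ∧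
              dist q.1 x < α * q.2},
            ENNReal.ofReal (q.2 ^ 2 * ∑ i, Complex.normSq (g q.1 q.2 i)) /
              (ENNReal.ofReal q.2 * volume (Metric.closedBall x (q.2 / 2) ∩ Ω)))
          ^ (1/2 : ℝ) ≤
        ENNReal.ofReal (C * Real.sqrt (1 + Real.log (R / ε))) *
          ⨆ (y : Fin n → ℝ) (_ : y ∈ Ω) (t : ℝ)
            (_ : 0 < t ∧ ENNReal.ofReal t < d ∧ dist y x < t), (‖u y t‖₊ : ℝ≥0∞) :=
  stmt8_general n d c₀ α hc₀ hα Cb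
end

section
/- Let n ≥ 1, μ ∈ (0,1], C₀, α ∈ (0,∞), p ∈ (n/(n+μ),1], and let Φ : (0,∞) → (0,∞) be nondecreasing, of upper type 1 with constant C₁ and of strictly lower type p; set Φ(0) := 0. Let Ω ⊂ ℝⁿ be open with closure Ω̄ and boundary ∂Ω, and let K : (0,∞)×Ω×Ω̄ → ℂ be measurable and satisfy, for all t ∈ (0,∞), x ∈ Ω and y, y₁, y₂ ∈ Ω̄: |K_t(x,y)| ≤ C₀ t^{-n/2} exp(−α‖x−y‖_∞²/t), |K_t(x,y₁) − K_t(x,y₂)| ≤ C₀ t^{-n/2} (‖y₁−y₂‖_∞/√t)^μ, and K_t(x,y) = 0 whenever y ∈ ∂Ω. Let Q₀ = Q(x₀,r₀) be a cube with Q₀ ∩ ∂Ω ≠ ∅ and let b : ℝⁿ → ℂ be bounded and measurable with supp b ⊂ Q₀ ∩ Ω. Define N(b)(x) := sup{ |∫_Ω K_{t²}(y,z) b(z) dz| : y ∈ Ω, t ∈ (0,∞), ‖x−y‖_∞ < t } for x ∈ Ω. Then there exists C, depending only on n, μ, p, C₀, α and C₁ (but not on b, Q₀ or Ω), such that ∫_Ω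 Φ(N(b)(x)) dx ≤ C |Q₀| Φ(‖b‖_{L^∞}). -/
/-!
Two estimates control `|∫_Ω K_{t²}(y,z) b(z) dz|` for `(y, t)` in the cone over `x`. The Gaussian
bound integrates to `C ‖b‖_∞` uniformly. When `D = ‖x - x₀‖_∞ ≥ 2 r₀`, the Dirichlet condition
`K_{t²}(y, z₀) = 0` at a boundary point `z₀ ∈ Q₀` lets the Hölder bound replace the missing moment
condition of `b`; interpolating it with the Gaussian bound gives `C ‖b‖_∞ (r₀ / D) ^ (n + θ μ)`,
where `θ < 1` is chosen with `(n + θ μ) p > n`. The types of `Φ` turn these into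
`Φ(N(b)(x)) ≤ C Φ(‖b‖_∞) min(1, (r₀ / D) ^ ((n + θ μ) p))`, which is summable over the dyadic
annuli around `x₀`.
-/

open MeasureTheory ENNReal

/-- The nontangential maximal function
`N(b)(x) = sup{ |∫_Ω K_{t²}(y,z) b(z) dz| : y ∈ Ω, t > 0, ‖x−y‖_∞ < t }`,
with `ℝⁿ = Fin n → ℝ` carrying the sup-norm. -/
noncomputable def nontangMax (n : ℕ) (Ω : Set (Fin n → ℝ))
    (K : ℝ → (Fin n → ℝ) → (Fin n → ℝ) → ℂ) (b : (Fin n → ℝ) → ℂ)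
    (x : Fin n → ℝ) : ℝ :=
  sSup {v : ℝ | ∃ y ∈ Ω, ∃ t : ℝ, 0 < t ∧ dist x y < t ∧
    v = ‖∫ z in Ω, K (t ^ 2) y z * b z‖}

theorem Real.exp_neg_le_factorial_div_pow {x : ℝ} (hx : 0 < x) (k : ℕ) :
    Real.exp (-x) ≤ k.factorial / x ^ k := by
  rw [Real.exp_neg, inv_le_comm₀ (Real.exp_pos x) (by positivity), inv_div]
  exact Real.pow_div_factorial_le_exp x hx.le k

theorem Real.min_le_rpow_mul_rpow {a b θ : ℝ} (ha : 0 ≤ a) (hb : 0 ≤ b)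
    (hθ : θ ∈ Set.Icc (0 : ℝ) 1) : min a b ≤ a ^ (1 - θ) * b ^ θ := by
  have hm : 0 ≤ min a b := le_min ha hb
  calc min a b = min a b ^ (1 - θ) * min a b ^ θ := by
        rw [← Real.rpow_add' hm (by norm_num)]; simp
    _ ≤ a ^ (1 - θ) * b ^ θ :=
      mul_le_mul (Real.rpow_le_rpow hm (min_le_left a b) (by linarith [hθ.2]))
        (Real.rpow_le_rpow hm (min_le_right a b) hθ.1) (by positivity) (by positivity)

/-- Either the aperture is large (`D ≤ 4 s`), or `ρ ≥ D / 2` and the Gaussian beats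
`(D / s) ^ (2 k)`. -/
theorem Real.rpow_div_mul_exp_neg_le {c β D s ρ : ℝ} {k : ℕ} (hc : 0 ≤ c) (hck : c ≤ 2 * k)
    (hβ : 0 < β) (hs : 0 < s) (hD : 0 < D) (hDρ : 3 * D ≤ 4 * (ρ + s)) :
    (D / s) ^ c * Real.exp (-(β * ρ ^ 2 / s ^ 2)) ≤ max (4 ^ c) (k.factorial * (4 / β) ^ k) := by
  rcases le_or_gt D (4 * s) with hnear | hfar
  · calc (D / s) ^ c * Real.exp (-(β * ρ ^ 2 / s ^ 2)) ≤ 4 ^ c * 1 := by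
          refine mul_le_mul (Real.rpow_le_rpow (by positivity) ((div_le_iff₀ hs).2 hnear) hc)
            (Real.exp_le_one_iff.2 (neg_nonpos.2 (by positivity))) (by positivity) (by positivity)
      _ ≤ _ := (mul_one (4 ^ c : ℝ)).trans_le (le_max_left _ _)
  have hρ : D / 2 ≤ ρ := by linarith
  set x := β * (D / s) ^ 2 / 4
  have hx : 0 < x := by positivity
  have hexp : Real.exp (-(β * ρ ^ 2 / s ^ 2)) ≤ Real.exp (-x) := by
    refine Real.exp_le_exp.2 (neg_le_neg ?_)
    calc x = β * (D / 2) ^ 2 / s ^ 2 := by ring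
      _ ≤ β * ρ ^ 2 / s ^ 2 := by gcongr
  have hpow : (D / s) ^ c ≤ (D / s) ^ (2 * k) := by
    rw [← Real.rpow_natCast]
    exact Real.rpow_le_rpow_of_exponent_le ((one_le_div hs).2 (by linarith))
      (by exact_mod_cast hck)
  calc (D / s) ^ c * Real.exp (-(β * ρ ^ 2 / s ^ 2))
      ≤ (D / s) ^ (2 * k) * (k.factorial / x ^ k) :=
        mul_le_mul hpow (hexp.trans (Real.exp_neg_le_factorial_div_pow hx k)) (by positivity)
          (by positivity)
    _ = k.factorial * (4 / β) ^ k := by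
        simp only [x, div_pow, mul_pow, ← pow_mul]
        field_simp
    _ ≤ _ := le_max_right _ _

theorem exists_mem_Ico_lt_add_mul_mul {n μ p : ℝ} (hn : 0 ≤ n) (hμ : 0 < μ)
    (hp : n / (n + μ) < p) : ∃ θ ∈ Set.Ico (0 : ℝ) 1, n < (n + θ * μ) * p := by
  have hp0 : 0 < p := (div_nonneg hn (by linarith)).trans_lt hp
  have hnp : n / p - n < μ := by
    rw [div_lt_iff₀ (by positivity)] at hp
    rw [sub_lt_iff_lt_add, div_lt_iff₀ hp0]
    linarith
  obtain ⟨w, hw, hwμ⟩ := exists_between (max_lt hμ hnp)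
  refine ⟨w / μ, ⟨div_nonneg ((le_max_left _ _).trans hw.le) hμ.le, (div_lt_one hμ).2 hwμ⟩, ?_⟩
  rw [div_mul_cancel₀ w hμ.ne', ← div_lt_iff₀ hp0]
  linarith [le_max_right 0 (n / p - n)]

theorem ae_norm_le_toReal_eLpNorm_top {X E : Type*} [MeasurableSpace X] [NormedAddCommGroup E]
    {μ : Measure X} {f : X → E} (hf : eLpNorm f ⊤ μ ≠ ⊤) :
    ∀ᵐ x ∂μ, ‖f x‖ ≤ (eLpNorm f ⊤ μ).toReal := by
  rw [eLpNorm_exponent_top] at hf ⊢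
  filter_upwards [ae_le_eLpNormEssSup (f := f) (μ := μ)] with x hx
  simpa using ENNReal.toReal_mono hf hx

theorem norm_setIntegral_le_of_ae_norm_le {X E : Type*} [MeasurableSpace X] [NormedAddCommGroup E]
    [NormedSpace ℝ E] {μ : Measure X} {s : Set X} {f : X → E} {g : X → ℝ} {M : ℝ} (hM : 0 ≤ M)
    (hfg : ∀ᵐ x ∂μ, ‖f x‖ ≤ g x) (hg : ∫⁻ x, ENNReal.ofReal (g x) ∂μ ≤ ENNReal.ofReal M) :
    ‖∫ x in s, f x ∂μ‖ ≤ M :=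
  (norm_integral_le_lintegral_norm _).trans <| ENNReal.toReal_le_of_le_ofReal hM <|
    (setLIntegral_le_lintegral _ _).trans <|
      (lintegral_mono_ae (hfg.mono fun _ hx => ENNReal.ofReal_le_ofReal hx)).trans hg

section DyadicAnnuli

variable {ι : Type*} [Fintype ι]

def dyadicAnnulus (c : ι → ℝ) (R : ℝ) (k : ℕ) : Set (ι → ℝ) :=
  Metric.ball c (2 ^ (k + 1) * R) \ Metric.ball c (2 ^ k * R)

theorem exists_mem_dyadicAnnulus (c : ι → ℝ) {R : ℝ} (hR : 0 < R) {z : ι → ℝ}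
    (hz : R ≤ dist z c) : ∃ k : ℕ, z ∈ dyadicAnnulus c R k := by
  obtain ⟨k, hk1, hk2⟩ := exists_nat_pow_near ((one_le_div hR).2 hz) one_lt_two
  rw [le_div_iff₀ hR] at hk1
  rw [div_lt_iff₀ hR] at hk2
  exact ⟨k, Metric.mem_ball.2 hk2, fun h => (Metric.mem_ball.1 h).not_ge hk1⟩

theorem rpow_div_dist_le_of_mem_dyadicAnnulus {c z : ι → ℝ} {R γ : ℝ} {k : ℕ} (hR : 0 < R)
    (hγ : 0 ≤ γ) (hz : z ∈ dyadicAnnulus c R k) :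
    (R / dist z c) ^ γ ≤ ((2 : ℝ) ^ (-γ)) ^ k := by
  have hk : 2 ^ k * R ≤ dist z c := not_lt.1 fun h => hz.2 (Metric.mem_ball.2 h)
  have hd : 0 < dist z c := (by positivity : (0 : ℝ) < 2 ^ k * R).trans_le hk
  calc (R / dist z c) ^ γ ≤ ((2 : ℝ) ^ k)⁻¹ ^ γ := by
        refine Real.rpow_le_rpow (by positivity) ?_ hγ
        rw [div_le_iff₀ hd, inv_mul_eq_div, le_div_iff₀ (by positivity)]
        linarith
    _ = ((2 : ℝ) ^ (-γ)) ^ k := by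
        rw [← Real.rpow_natCast, Real.inv_rpow (by positivity), ← Real.rpow_mul two_pos.le,
          ← Real.rpow_neg two_pos.le, ← Real.rpow_natCast, ← Real.rpow_mul two_pos.le]
        ring_nf

theorem volume_dyadicAnnulus_le (c : ι → ℝ) {R : ℝ} (hR : 0 < R) (k : ℕ) :
    volume (dyadicAnnulus c R k) ≤
      ENNReal.ofReal ((4 * R) ^ Fintype.card ι * (2 ^ Fintype.card ι) ^ k) := by
  refine (measure_mono Set.sdiff_subset).trans_eq ?_
  rw [Real.volume_pi_ball c (by positivity)]
  congr 1
  ring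

noncomputable def dyadicDecayConst (d : ℕ) (γ : ℝ) : ℝ := 4 ^ d * (1 - (2 : ℝ) ^ ((d : ℝ) - γ))⁻¹

theorem dyadicDecayConst_pos {d : ℕ} {γ : ℝ} (hγ : (d : ℝ) < γ) : 0 < dyadicDecayConst d γ := by
  have : (2 : ℝ) ^ ((d : ℝ) - γ) < 1 :=
    Real.rpow_lt_one_of_one_lt_of_neg one_lt_two (by linarith)
  have : 0 < 1 - (2 : ℝ) ^ ((d : ℝ) - γ) := by linarith
  unfold dyadicDecayConst
  positivity

/-- The `k`-th dyadic annulus contributes at most `A 2 ^ (-k γ) (4 R) ^ d 2 ^ (k d)`, a geometric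
series since `γ > d`. -/
theorem lintegral_le_of_le_rpow_decay (c : ι → ℝ) {R a A γ : ℝ}
    (hR : 0 < R) (ha : 0 ≤ a) (hA : 0 ≤ A) (hγ : (Fintype.card ι : ℝ) < γ)
    {f : (ι → ℝ) → ℝ≥0∞} (hf : ∀ z, f z ≤ ENNReal.ofReal a)
    (hdecay : ∀ z, R ≤ dist z c → f z ≤ ENNReal.ofReal (A * (R / dist z c) ^ γ)) :
    ∫⁻ z, f z ≤ ENNReal.ofReal
      ((2 ^ Fintype.card ι * a + dyadicDecayConst (Fintype.card ι) γ * A) *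
        R ^ Fintype.card ι) := by
  set d := Fintype.card ι
  set r : ℝ := (2 : ℝ) ^ (-γ)
  set W := dyadicAnnulus c R
  have hW : ∀ k, MeasurableSet (W k) := fun k => measurableSet_ball.diff measurableSet_ball
  have hdr : (2 : ℝ) ^ d * r = 2 ^ ((d : ℝ) - γ) := by
    rw [sub_eq_add_neg, Real.rpow_add two_pos, Real.rpow_natCast]
  have hdr1 : (2 : ℝ) ^ d * r < 1 := by
    rw [hdr]; exact Real.rpow_lt_one_of_one_lt_of_neg one_lt_two (by linarith)
  have hfF : ∀ z, f z ≤ (Metric.ball c R).indicator (fun _ => ENNReal.ofReal a) z +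
      ∑' k, (W k).indicator (fun _ => ENNReal.ofReal (A * r ^ k)) z := by
    intro z
    by_cases hz : dist z c < R
    · rw [Set.indicator_of_mem (Metric.mem_ball.2 hz)]
      exact (hf z).trans le_self_add
    obtain ⟨k, hzW⟩ := exists_mem_dyadicAnnulus c hR (not_lt.1 hz)
    calc f z ≤ ENNReal.ofReal (A * r ^ k) := (hdecay z (not_lt.1 hz)).trans <|
          ENNReal.ofReal_le_ofReal <| mul_le_mul_of_nonneg_left
            (rpow_div_dist_le_of_mem_dyadicAnnulus hR ((Nat.cast_nonneg d).trans hγ.le) hzW) hA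
      _ = (W k).indicator (fun _ => ENNReal.ofReal (A * r ^ k)) z :=
          (Set.indicator_of_mem hzW (fun _ => _)).symm
      _ ≤ ∑' k, (W k).indicator (fun _ => ENNReal.ofReal (A * r ^ k)) z := ENNReal.le_tsum k
      _ ≤ _ := le_add_self
  have hterm : ∀ k : ℕ, ∫⁻ z, (W k).indicator (fun _ => ENNReal.ofReal (A * r ^ k)) z ≤
      ENNReal.ofReal (4 ^ d * R ^ d * A * (2 ^ d * r) ^ k) := by
    intro k
    rw [lintegral_indicator (hW k), setLIntegral_const]
    refine (mul_le_mul_right (volume_dyadicAnnulus_le c hR k) _).trans_eq ?_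
    rw [← ENNReal.ofReal_mul (by positivity)]
    congr 1
    ring
  have hgeom := (summable_geometric_of_lt_one (by positivity) hdr1).mul_left (4 ^ d * R ^ d * A)
  refine (lintegral_mono hfF).trans ?_
  rw [lintegral_add_left (measurable_const.indicator measurableSet_ball),
    lintegral_indicator measurableSet_ball, setLIntegral_const, Real.volume_pi_ball c hR,
    lintegral_tsum fun k => (measurable_const.indicator (hW k)).aemeasurable]
  refine (add_le_add le_rfl (ENNReal.tsum_le_tsum hterm)).trans ?_
  rw [← ENNReal.ofReal_tsum_of_nonneg (fun k => by positivity) hgeom, tsum_mul_left,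
    tsum_geometric_of_lt_one (by positivity) hdr1, ← ENNReal.ofReal_mul ha,
    ← ENNReal.ofReal_add (by positivity) (by positivity), hdr, dyadicDecayConst]
  exact ENNReal.ofReal_le_ofReal (le_of_eq (by ring))

end DyadicAnnuli

/-- `exp (-x) ≤ (d + 1)! / x ^ (d + 1)` makes the Gaussian decay like `dist ^ (-2 (d + 1))`. -/
noncomputable def gaussianConst (d : ℕ) (α : ℝ) : ℝ :=
  2 ^ d + dyadicDecayConst d (2 * (d + 1) : ℕ) * ((d + 1).factorial / α ^ (d + 1))

theorem lintegral_exp_neg_mul_dist_sq_le {ι : Type*} [Fintype ι] (y : ι → ℝ) {α s : ℝ}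
    (hα : 0 < α) (hs : 0 < s) :
    ∫⁻ z, ENNReal.ofReal (Real.exp (-(α * dist y z ^ 2 / s ^ 2))) ≤
      ENNReal.ofReal (gaussianConst (Fintype.card ι) α * s ^ Fintype.card ι) := by
  set d := Fintype.card ι
  have key := lintegral_le_of_le_rpow_decay y hs zero_le_one
    (A := (d + 1).factorial / α ^ (d + 1)) (γ := (2 * (d + 1) : ℕ)) (by positivity)
    (by push_cast; linarith) (f := fun z => ENNReal.ofReal (Real.exp (-(α * dist y z ^ 2 / s ^ 2))))
    (fun z => ENNReal.ofReal_le_ofReal (Real.exp_le_one_iff.2 (neg_nonpos.2 (by positivity)))) ?_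
  · rw [gaussianConst]
    convert key using 3; ring
  intro z hz
  have hd : 0 < dist z y / s := div_pos (hs.trans_le hz) hs
  rw [dist_comm, show α * dist z y ^ 2 / s ^ 2 = α * (dist z y / s) ^ 2 by ring]
  refine ENNReal.ofReal_le_ofReal ((Real.exp_neg_le_factorial_div_pow (by positivity) (d + 1)).trans
    (le_of_eq ?_))
  rw [Real.rpow_natCast, ← inv_div (dist z y) s, inv_pow, mul_pow, ← pow_mul]
  field_simp

theorem gaussianConst_pos (d : ℕ) {α : ℝ} (hα : 0 < α) : 0 < gaussianConst d α := by
  have := dyadicDecayConst_pos (d := d) (γ := (2 * (d + 1) : ℕ)) (by push_cast; linarith)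
  unfold gaussianConst
  positivity

structure IsGrowthFunction (Φ : ℝ → ℝ) (C₁ p : ℝ) : Prop where
  monotoneOn : MonotoneOn Φ (Set.Ioi 0)
  pos : ∀ t ∈ Set.Ioi (0 : ℝ), 0 < Φ t
  map_zero : Φ 0 = 0
  upperType : ∀ s ∈ Set.Ioi (0 : ℝ), ∀ t : ℝ, 1 ≤ t → Φ (s * t) ≤ C₁ * t * Φ s
  strictlyLowerType : ∀ s ∈ Set.Ioi (0 : ℝ), ∀ t ∈ Set.Ioo (0 : ℝ) 1, Φ (s * t) ≤ t ^ p * Φ s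

namespace IsGrowthFunction

variable {Φ : ℝ → ℝ} {C₁ p : ℝ}

theorem nonneg (hΦ : IsGrowthFunction Φ C₁ p) {s : ℝ} (hs : 0 ≤ s) : 0 ≤ Φ s := by
  rcases hs.eq_or_lt with rfl | hs
  · exact hΦ.map_zero.ge
  · exact (hΦ.pos s hs).le

theorem apply_le_of_le_mul_mul (hΦ : IsGrowthFunction Φ C₁ p) (hC₁ : 0 ≤ C₁) {B M t u : ℝ}
    (hB : 0 ≤ B) (hM : 1 ≤ M) (ht : t ∈ Set.Ioc (0 : ℝ) 1) (hu : 0 ≤ u) (huB : u ≤ B * M * t) :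
    Φ u ≤ C₁ * M * Φ B * t ^ p := by
  rcases hu.eq_or_lt with rfl | hu
  · rw [hΦ.map_zero]
    have := hΦ.nonneg hB
    have := ht.1
    positivity
  have hBM : 0 < B * M := pos_of_mul_pos_left (hu.trans_le huB) ht.1.le
  calc Φ u ≤ Φ (B * M * t) := hΦ.monotoneOn hu (mul_pos hBM ht.1) huB
    _ ≤ t ^ p * Φ (B * M) := by
        rcases ht.2.eq_or_lt with rfl | ht1
        · simp
        · exact hΦ.strictlyLowerType _ hBM t ⟨ht.1, ht1⟩
    _ ≤ t ^ p * (C₁ * M * Φ B) :=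
        mul_le_mul_of_nonneg_left (hΦ.upperType B (pos_of_mul_pos_left hBM (by linarith)) M hM)
          (Real.rpow_nonneg ht.1.le p)
    _ = C₁ * M * Φ B * t ^ p := by ring

theorem lintegral_ofReal_comp_le_of_rpow_decay {ι : Type*} [Fintype ι]
    (hΦ : IsGrowthFunction Φ C₁ p) (hC₁ : 0 ≤ C₁) (c : ι → ℝ)
    {g : (ι → ℝ) → ℝ} {R B M γ : ℝ} (hR : 0 < R) (hB : 0 ≤ B) (hM : 1 ≤ M) (hγ : 0 ≤ γ)
    (hγp : (Fintype.card ι : ℝ) < γ * p) (hg0 : ∀ x, 0 ≤ g x) (hg : ∀ x, g x ≤ B * M)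
    (hdecay : ∀ x, R ≤ dist x c → g x ≤ B * M * (R / dist x c) ^ γ) :
    ∫⁻ x, ENNReal.ofReal (Φ (g x)) ≤ ENNReal.ofReal (C₁ * M * Φ B *
      (2 ^ Fintype.card ι + dyadicDecayConst (Fintype.card ι) (γ * p)) * R ^ Fintype.card ι) := by
  have hΦB := hΦ.nonneg hB
  have key := lintegral_le_of_le_rpow_decay c hR (a := C₁ * M * Φ B) (A := C₁ * M * Φ B)
    (by positivity) (by positivity) hγp (f := fun x => ENNReal.ofReal (Φ (g x)))
    (fun x => ENNReal.ofReal_le_ofReal ?_) (fun x hx => ENNReal.ofReal_le_ofReal ?_)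
  · exact key.trans_eq (congrArg ENNReal.ofReal (by ring))
  · simpa using hΦ.apply_le_of_le_mul_mul hC₁ hB hM (t := 1) ⟨one_pos, le_rfl⟩ (hg0 x)
      (by simpa using hg x)
  · have hd : 0 < dist x c := hR.trans_le hx
    have ht : (R / dist x c) ^ γ ∈ Set.Ioc (0 : ℝ) 1 :=
      ⟨by positivity, Real.rpow_le_one (by positivity) ((div_le_one hd).2 hx) hγ⟩
    rw [Real.rpow_mul (by positivity)]
    exact hΦ.apply_le_of_le_mul_mul hC₁ hB hM ht (hg0 x) (hdecay x hx)

end IsGrowthFunction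

theorem nontangMax_nonneg (n : ℕ) (Ω : Set (Fin n → ℝ))
    (K : ℝ → (Fin n → ℝ) → (Fin n → ℝ) → ℂ) (b : (Fin n → ℝ) → ℂ) (x : Fin n → ℝ) :
    0 ≤ nontangMax n Ω K b x :=
  Real.sSup_nonneg fun _ ⟨_, _, _, _, _, hv⟩ => hv ▸ norm_nonneg _

theorem nontangMax_le {n : ℕ} {Ω : Set (Fin n → ℝ)} {K : ℝ → (Fin n → ℝ) → (Fin n → ℝ) → ℂ}
    {b : (Fin n → ℝ) → ℂ} {x : Fin n → ℝ} {M : ℝ} (hM : 0 ≤ M)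
    (h : ∀ y ∈ Ω, ∀ t : ℝ, 0 < t → dist x y < t → ‖∫ z in Ω, K (t ^ 2) y z * b z‖ ≤ M) :
    nontangMax n Ω K b x ≤ M :=
  Real.sSup_le (fun _ ⟨y, hy, t, ht, hxt, hv⟩ => hv ▸ h y hy t ht hxt) hM

section Kernel

variable {n : ℕ}

def KernelGaussianBound (Ω : Set (Fin n → ℝ)) (K : ℝ → (Fin n → ℝ) → (Fin n → ℝ) → ℂ)
    (C₀ α : ℝ) : Prop :=
  ∀ t : ℝ, 0 < t → ∀ x ∈ Ω, ∀ y ∈ closure Ω,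
    ‖K t x y‖ ≤ C₀ * t ^ (-(n : ℝ) / 2) * Real.exp (-(α * dist x y ^ 2 / t))

def KernelHolderBound (Ω : Set (Fin n → ℝ)) (K : ℝ → (Fin n → ℝ) → (Fin n → ℝ) → ℂ)
    (C₀ μ : ℝ) : Prop :=
  ∀ t : ℝ, 0 < t → ∀ x ∈ Ω, ∀ y₁ ∈ closure Ω, ∀ y₂ ∈ closure Ω,
    ‖K t x y₁ - K t x y₂‖ ≤ C₀ * t ^ (-(n : ℝ) / 2) * (dist y₁ y₂ / Real.sqrt t) ^ μ

def KernelVanishesOnFrontier (Ω : Set (Fin n → ℝ)) (K : ℝ → (Fin n → ℝ) → (Fin n → ℝ) → ℂ) :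
    Prop :=
  ∀ t : ℝ, 0 < t → ∀ x ∈ Ω, ∀ y ∈ frontier Ω, K t x y = 0

theorem sq_rpow_neg_natCast_div_two {s : ℝ} (hs : 0 < s) :
    (s ^ 2) ^ (-(n : ℝ) / 2) = (s ^ n)⁻¹ := by
  rw [← Real.rpow_natCast s 2, ← Real.rpow_mul hs.le, ← Real.rpow_natCast s n,
    ← Real.rpow_neg hs.le]
  push_cast
  ring_nf

variable {Ω : Set (Fin n → ℝ)} {K : ℝ → (Fin n → ℝ) → (Fin n → ℝ) → ℂ} {C₀ : ℝ}

theorem KernelGaussianBound.norm_le_of_sq {α s : ℝ} (hK : KernelGaussianBound Ω K C₀ α)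
    (hs : 0 < s) {x y : Fin n → ℝ} (hx : x ∈ Ω) (hy : y ∈ closure Ω) :
    ‖K (s ^ 2) x y‖ ≤ C₀ * (s ^ n)⁻¹ * Real.exp (-(α * dist x y ^ 2 / s ^ 2)) := by
  have h := hK (s ^ 2) (by positivity) x hx y hy
  rwa [sq_rpow_neg_natCast_div_two hs] at h

theorem KernelHolderBound.norm_sub_le_of_sq {μ s : ℝ} (hK : KernelHolderBound Ω K C₀ μ)
    (hs : 0 < s) {x y₁ y₂ : Fin n → ℝ} (hx : x ∈ Ω) (hy₁ : y₁ ∈ closure Ω) (hy₂ : y₂ ∈ closure Ω) :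
    ‖K (s ^ 2) x y₁ - K (s ^ 2) x y₂‖ ≤ C₀ * (s ^ n)⁻¹ * (dist y₁ y₂ / s) ^ μ := by
  have h := hK (s ^ 2) (by positivity) x hx y₁ hy₁ y₂ hy₂
  rwa [sq_rpow_neg_natCast_div_two hs, Real.sqrt_sq hs.le] at h

theorem norm_setIntegral_kernel_mul_le_of_gaussianBound {α B s : ℝ} {b : (Fin n → ℝ) → ℂ}
    {y : Fin n → ℝ} (hK : KernelGaussianBound Ω K C₀ α) (hC₀ : 0 ≤ C₀) (hα : 0 < α)
    (hB : 0 ≤ B) (hb : ∀ᵐ z, ‖b z‖ ≤ B) (hbΩ : Function.support b ⊆ Ω) (hy : y ∈ Ω)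
    (hs : 0 < s) :
    ‖∫ z in Ω, K (s ^ 2) y z * b z‖ ≤ C₀ * gaussianConst n α * B := by
  have hG := gaussianConst_pos n hα
  refine norm_setIntegral_le_of_ae_norm_le (by positivity)
    (g := fun z => C₀ * (s ^ n)⁻¹ * B * Real.exp (-(α * dist y z ^ 2 / s ^ 2))) ?_ ?_
  · filter_upwards [hb] with z hz
    by_cases hbz : b z = 0
    · rw [hbz, mul_zero, norm_zero]; positivity
    rw [norm_mul, mul_right_comm]
    exact mul_le_mul (hK.norm_le_of_sq hs hy (subset_closure (hbΩ hbz))) hz (norm_nonneg _)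
      (by positivity)
  · have hc : 0 ≤ C₀ * (s ^ n)⁻¹ * B := by positivity
    calc ∫⁻ z, ENNReal.ofReal (C₀ * (s ^ n)⁻¹ * B * Real.exp (-(α * dist y z ^ 2 / s ^ 2)))
        = ENNReal.ofReal (C₀ * (s ^ n)⁻¹ * B) *
            ∫⁻ z, ENNReal.ofReal (Real.exp (-(α * dist y z ^ 2 / s ^ 2))) := by
          simp_rw [ENNReal.ofReal_mul hc]
          exact lintegral_const_mul' _ _ ENNReal.ofReal_ne_top
      _ ≤ ENNReal.ofReal (C₀ * (s ^ n)⁻¹ * B) * ENNReal.ofReal (gaussianConst n α * s ^ n) := by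
          gcongr
          simpa using lintegral_exp_neg_mul_dist_sq_le y hα hs
      _ = ENNReal.ofReal (C₀ * gaussianConst n α * B) := by
          rw [← ENNReal.ofReal_mul hc]
          congr 1
          field_simp

theorem norm_kernel_le_of_mem_frontier {α μ θ s : ℝ} (hKg : KernelGaussianBound Ω K C₀ α)
    (hKh : KernelHolderBound Ω K C₀ μ) (hKd : KernelVanishesOnFrontier Ω K) (hC₀ : 0 ≤ C₀)
    (hθ : θ ∈ Set.Icc (0 : ℝ) 1) (hs : 0 < s) {y z z₀ : Fin n → ℝ} (hy : y ∈ Ω)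
    (hz : z ∈ closure Ω) (hz₀ : z₀ ∈ frontier Ω) :
    ‖K (s ^ 2) y z‖ ≤
      C₀ * (s ^ n)⁻¹ * (Real.exp (-((1 - θ) * α * dist y z ^ 2 / s ^ 2)) *
        (dist z z₀ / s) ^ (θ * μ)) := by
  have hgauss := hKg.norm_le_of_sq hs hy hz
  have hholder := hKh.norm_sub_le_of_sq hs hy hz (frontier_subset_closure hz₀)
  rw [hKd _ (by positivity) y hy z₀ hz₀, sub_zero] at hholder
  have hds : 0 ≤ dist z z₀ / s := by positivity
  calc ‖K (s ^ 2) y z‖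
      ≤ C₀ * (s ^ n)⁻¹ * min (Real.exp (-(α * dist y z ^ 2 / s ^ 2))) ((dist z z₀ / s) ^ μ) := by
        rw [mul_min_of_nonneg _ _ (by positivity)]
        exact le_min hgauss hholder
    _ ≤ C₀ * (s ^ n)⁻¹ * (Real.exp (-(α * dist y z ^ 2 / s ^ 2)) ^ (1 - θ) *
          ((dist z z₀ / s) ^ μ) ^ θ) := by
        gcongr
        exact Real.min_le_rpow_mul_rpow (Real.exp_pos _).le (by positivity) hθ
    _ = _ := by
        rw [← Real.exp_mul, ← Real.rpow_mul hds]
        ring_nf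

noncomputable def farConst (n : ℕ) (μ θ α : ℝ) : ℝ :=
  max (4 ^ ((n : ℝ) + θ * μ)) ((n + 1).factorial * (4 / ((1 - θ) * α)) ^ (n + 1))

theorem farConst_nonneg (n : ℕ) (μ θ α : ℝ) : 0 ≤ farConst n μ θ α :=
  (Real.rpow_nonneg zero_le_four _).trans (le_max_left _ _)

theorem norm_kernel_le_of_far {α μ θ s r₀ : ℝ} {x x₀ y z z₀ : Fin n → ℝ}
    (hKg : KernelGaussianBound Ω K C₀ α) (hKh : KernelHolderBound Ω K C₀ μ)
    (hKd : KernelVanishesOnFrontier Ω K) (hC₀ : 0 ≤ C₀) (hα : 0 < α)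
    (hμ : μ ∈ Set.Ioc (0 : ℝ) 1) (hθ : θ ∈ Set.Ico (0 : ℝ) 1) (hr₀ : 0 < r₀)
    (hz₀ : z₀ ∈ Metric.closedBall x₀ (r₀ / 2) ∩ frontier Ω)
    (hz : z ∈ Metric.closedBall x₀ (r₀ / 2) ∩ Ω) (hy : y ∈ Ω) (hs : 0 < s)
    (hD : 2 * r₀ ≤ dist x x₀) (hxy : dist x y < s) :
    ‖K (s ^ 2) y z‖ ≤ C₀ * farConst n μ θ α * (r₀ / dist x x₀) ^ ((n : ℝ) + θ * μ) / r₀ ^ n := by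
  set D := dist x x₀
  set c : ℝ := n + θ * μ
  set E := Real.exp (-((1 - θ) * α * dist y z ^ 2 / s ^ 2))
  have hD0 : 0 < D := by linarith
  have hθμ : 0 ≤ θ * μ := mul_nonneg hθ.1 hμ.1.le
  have hzz₀ : dist z z₀ ≤ r₀ := by
    linarith [dist_triangle_right z z₀ x₀, Metric.mem_closedBall.1 hz.1,
      Metric.mem_closedBall.1 hz₀.1]
  have hgeom : 3 * D ≤ 4 * (dist y z + s) := by
    linarith [dist_triangle4 x y z x₀, Metric.mem_closedBall.1 hz.1]
  have hdecay : (D / s) ^ c * E ≤ farConst n μ θ α :=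
    Real.rpow_div_mul_exp_neg_le (by positivity)
      (by push_cast; linarith [mul_le_one₀ hθ.2.le hμ.1.le hμ.2])
      (mul_pos (sub_pos.2 hθ.2) hα) hs hD0 hgeom
  have hsplit : (r₀ / D) ^ c * (D / s) ^ c = r₀ ^ n / s ^ n * (r₀ / s) ^ (θ * μ) := by
    rw [← Real.mul_rpow (by positivity) (by positivity), div_mul_div_cancel₀ hD0.ne',
      Real.rpow_add (by positivity), Real.rpow_natCast, div_pow]
  calc ‖K (s ^ 2) y z‖ ≤ C₀ * (s ^ n)⁻¹ * (E * (dist z z₀ / s) ^ (θ * μ)) :=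
        norm_kernel_le_of_mem_frontier hKg hKh hKd hC₀ ⟨hθ.1, hθ.2.le⟩ hs hy
          (subset_closure hz.2) hz₀.2
    _ ≤ C₀ * (s ^ n)⁻¹ * (E * (r₀ / s) ^ (θ * μ)) := by gcongr
    _ = C₀ * (r₀ / D) ^ c / r₀ ^ n * ((D / s) ^ c * E) := by
        rw [show C₀ * (r₀ / D) ^ c / r₀ ^ n * ((D / s) ^ c * E) =
          C₀ / r₀ ^ n * E * ((r₀ / D) ^ c * (D / s) ^ c) by ring, hsplit]
        field_simp
    _ ≤ C₀ * (r₀ / D) ^ c / r₀ ^ n * farConst n μ θ α := by gcongr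
    _ = C₀ * farConst n μ θ α * (r₀ / D) ^ c / r₀ ^ n := by ring

theorem norm_setIntegral_kernel_mul_le_of_far {α μ θ B s r₀ : ℝ} {b : (Fin n → ℝ) → ℂ}
    {x x₀ y z₀ : Fin n → ℝ} (hKg : KernelGaussianBound Ω K C₀ α)
    (hKh : KernelHolderBound Ω K C₀ μ) (hKd : KernelVanishesOnFrontier Ω K) (hC₀ : 0 ≤ C₀)
    (hα : 0 < α) (hμ : μ ∈ Set.Ioc (0 : ℝ) 1) (hθ : θ ∈ Set.Ico (0 : ℝ) 1) (hr₀ : 0 < r₀)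
    (hz₀ : z₀ ∈ Metric.closedBall x₀ (r₀ / 2) ∩ frontier Ω) (hB : 0 ≤ B)
    (hb : ∀ᵐ z, ‖b z‖ ≤ B) (hsupp : Function.support b ⊆ Metric.closedBall x₀ (r₀ / 2) ∩ Ω)
    (hy : y ∈ Ω) (hs : 0 < s) (hD : 2 * r₀ ≤ dist x x₀) (hxy : dist x y < s) :
    ‖∫ z in Ω, K (s ^ 2) y z * b z‖ ≤
      C₀ * farConst n μ θ α * B * (r₀ / dist x x₀) ^ ((n : ℝ) + θ * μ) := by
  set Q := Metric.closedBall x₀ (r₀ / 2)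
  have hD0 : 0 < dist x x₀ := by linarith
  have hM := farConst_nonneg n μ θ α
  set v := C₀ * farConst n μ θ α * (r₀ / dist x x₀) ^ ((n : ℝ) + θ * μ) / r₀ ^ n * B
  have hv : 0 ≤ v := by positivity
  refine norm_setIntegral_le_of_ae_norm_le (by positivity) (g := Q.indicator fun _ => v) ?_ ?_
  · filter_upwards [hb] with z hz
    by_cases hbz : b z = 0
    · rw [hbz, mul_zero, norm_zero]
      exact Set.indicator_nonneg (fun _ _ => hv) z
    rw [Set.indicator_of_mem (hsupp hbz).1, norm_mul]
    exact mul_le_mul (norm_kernel_le_of_far hKg hKh hKd hC₀ hα hμ hθ hr₀ hz₀ (hsupp hbz) hy hs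
      hD hxy) hz (norm_nonneg _) (by positivity)
  · calc ∫⁻ z, ENNReal.ofReal (Q.indicator (fun _ => v) z)
        = ∫⁻ z, Q.indicator (fun _ => ENNReal.ofReal v) z :=
          lintegral_congr fun z => by by_cases hz : z ∈ Q <;> simp [hz]
      _ ≤ _ := by
          rw [lintegral_indicator_const measurableSet_closedBall,
            Real.volume_pi_closedBall x₀ (by positivity), Fintype.card_fin,
            ← ENNReal.ofReal_mul hv]
          refine ENNReal.ofReal_le_ofReal (le_of_eq ?_)
          simp only [v]
          field_simp

end Kernel

theorem stmt14_general (n : ℕ) (μ : ℝ) (hμ : μ ∈ Set.Ioc (0:ℝ) 1)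
    (C₀ α : ℝ) (hC₀ : 0 < C₀) (hα : 0 < α)
    (p : ℝ) (hp : p ∈ Set.Ioc ((n : ℝ) / (n + μ)) 1) (C₁ : ℝ) (hC₁ : 1 ≤ C₁) :
    ∃ C : ℝ, 0 < C ∧
    ∀ Φ : ℝ → ℝ, MonotoneOn Φ (Set.Ioi 0) → (∀ t ∈ Set.Ioi (0:ℝ), 0 < Φ t) → Φ 0 = 0 →
      (∀ s ∈ Set.Ioi (0:ℝ), ∀ t : ℝ, 1 ≤ t → Φ (s * t) ≤ C₁ * t * Φ s) →
      (∀ s ∈ Set.Ioi (0:ℝ), ∀ t ∈ Set.Ioo (0:ℝ) 1, Φ (s * t) ≤ t ^ p * Φ s) →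
    ∀ (Ω : Set (Fin n → ℝ)), IsOpen Ω →
    ∀ K : ℝ → (Fin n → ℝ) → (Fin n → ℝ) → ℂ,
      Measurable (fun q : ℝ × (Fin n → ℝ) × (Fin n → ℝ) => K q.1 q.2.1 q.2.2) →
      (∀ t : ℝ, 0 < t → ∀ x ∈ Ω, ∀ y ∈ closure Ω,
        ‖K t x y‖ ≤
          C₀ * t ^ (-(n : ℝ) / 2) * Real.exp (-(α * dist x y ^ 2 / t))) →
      (∀ t : ℝ, 0 < t → ∀ x ∈ Ω, ∀ y₁ ∈ closure Ω, ∀ y₂ ∈ closure Ω,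
        ‖K t x y₁ - K t x y₂‖ ≤
          C₀ * t ^ (-(n : ℝ) / 2) * (dist y₁ y₂ / Real.sqrt t) ^ μ) →
      (∀ t : ℝ, 0 < t → ∀ x ∈ Ω, ∀ y ∈ frontier Ω, K t x y = 0) →
    ∀ (x₀ : Fin n → ℝ) (r₀ : ℝ), 0 < r₀ →
      (Metric.closedBall x₀ (r₀ / 2) ∩ frontier Ω).Nonempty →
    ∀ b : (Fin n → ℝ) → ℂ, Measurable b → eLpNorm b ⊤ volume ≠ ⊤ →
      Function.support b ⊆ Metric.closedBall x₀ (r₀ / 2) ∩ Ω →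
      (∫⁻ x in Ω, ENNReal.ofReal (Φ (nontangMax n Ω K b x))) ≤
        ENNReal.ofReal (C * r₀ ^ n * Φ ((eLpNorm b ⊤ volume).toReal)) := by
  obtain ⟨θ, hθ, hθp⟩ := exists_mem_Ico_lt_add_mul_mul (Nat.cast_nonneg n) hμ.1 hp.1
  set c : ℝ := n + θ * μ
  set M := max (max (C₀ * gaussianConst n α) (C₀ * farConst n μ θ α)) 1
  have hM : 1 ≤ M := le_max_right _ _
  have hc : 0 ≤ c := add_nonneg (Nat.cast_nonneg n) (mul_nonneg hθ.1 hμ.1.le)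
  have hdecay := dyadicDecayConst_pos hθp
  refine ⟨C₁ * M * (2 ^ n + dyadicDecayConst n (c * p)) * 2 ^ n, by positivity, ?_⟩
  intro Φ hmono hpos h0 hupper hlower Ω _ K _ hKg hKh hKd x₀ r₀ hr₀ ⟨z₀, hz₀⟩ b _ hbtop hsupp
  set B := (eLpNorm b ⊤ volume).toReal
  have hB : 0 ≤ B := ENNReal.toReal_nonneg
  have hb := ae_norm_le_toReal_eLpNorm_top hbtop
  have hnear : ∀ x, nontangMax n Ω K b x ≤ B * M := fun x =>
    nontangMax_le (by positivity) fun y hy t ht _ =>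
      (norm_setIntegral_kernel_mul_le_of_gaussianBound hKg hC₀.le hα hB hb
        (hsupp.trans Set.inter_subset_right) hy ht).trans <| by
      rw [mul_comm B]
      gcongr
      exact (le_max_left _ _).trans (le_max_left _ _)
  have hfar : ∀ x, 2 * r₀ ≤ dist x x₀ →
      nontangMax n Ω K b x ≤ B * M * (2 * r₀ / dist x x₀) ^ c := fun x hx =>
    nontangMax_le (by positivity) fun y hy t ht hxt =>
      (norm_setIntegral_kernel_mul_le_of_far hKg hKh hKd hC₀.le hα hμ hθ hr₀ hz₀ hB hb hsupp hy
        ht hx hxt).trans <| by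
      rw [mul_comm _ B]
      gcongr
      · exact (le_max_right _ _).trans (le_max_left _ _)
      · linarith
  have hΦ : IsGrowthFunction Φ C₁ p := ⟨hmono, hpos, h0, hupper, hlower⟩
  have key := hΦ.lintegral_ofReal_comp_le_of_rpow_decay (by linarith) x₀ (R := 2 * r₀)
    (by positivity) hB hM hc (by simpa using hθp)
    (nontangMax_nonneg n Ω K b) hnear hfar
  refine (setLIntegral_le_lintegral _ _).trans (key.trans_eq (congrArg ENNReal.ofReal ?_))
  simp only [Fintype.card_fin]
  ring

/-- Dirichlet boundary case. The kernel has Gaussian size and Hölder regularity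
(second variable ranging over `closure Ω`) and vanishes when the second variable lies on
`∂Ω`; `b` is bounded and supported in `Q₀ ∩ Ω` where the cube `Q₀ = Q(x₀,r₀)` meets `∂Ω`
(here `Q₀ = closedBall x₀ (r₀/2)` for the sup-norm, `|Q₀| = r₀ⁿ`); no moment condition on `b`
is assumed. Then `∫_Ω Φ(N(b)) ≤ C |Q₀| Φ(‖b‖_{L^∞})` with `C` independent of `b`, `Q₀`, `Ω`. -/
theorem stmt14 (n : ℕ) (hn : 1 ≤ n) (μ : ℝ) (hμ : μ ∈ Set.Ioc (0:ℝ) 1)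
    (C₀ α : ℝ) (hC₀ : 0 < C₀) (hα : 0 < α)
    (p : ℝ) (hp : p ∈ Set.Ioc ((n : ℝ) / (n + μ)) 1) (C₁ : ℝ) (hC₁ : 1 ≤ C₁) :
    ∃ C : ℝ, 0 < C ∧
    ∀ Φ : ℝ → ℝ, MonotoneOn Φ (Set.Ioi 0) → (∀ t ∈ Set.Ioi (0:ℝ), 0 < Φ t) → Φ 0 = 0 →
      (∀ s ∈ Set.Ioi (0:ℝ), ∀ t : ℝ, 1 ≤ t → Φ (s * t) ≤ C₁ * t * Φ s) →
      (∀ s ∈ Set.Ioi (0:ℝ), ∀ t ∈ Set.Ioo (0:ℝ) 1, Φ (s * t) ≤ t ^ p * Φ s) →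
    ∀ (Ω : Set (Fin n → ℝ)), IsOpen Ω →
    ∀ K : ℝ → (Fin n → ℝ) → (Fin n → ℝ) → ℂ,
      Measurable (fun q : ℝ × (Fin n → ℝ) × (Fin n → ℝ) => K q.1 q.2.1 q.2.2) →
      (∀ t : ℝ, 0 < t → ∀ x ∈ Ω, ∀ y ∈ closure Ω,
        ‖K t x y‖ ≤
          C₀ * t ^ (-(n : ℝ) / 2) * Real.exp (-(α * dist x y ^ 2 / t))) →
      (∀ t : ℝ, 0 < t → ∀ x ∈ Ω, ∀ y₁ ∈ closure Ω, ∀ y₂ ∈ closure Ω,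
        ‖K t x y₁ - K t x y₂‖ ≤
          C₀ * t ^ (-(n : ℝ) / 2) * (dist y₁ y₂ / Real.sqrt t) ^ μ) →
      (∀ t : ℝ, 0 < t → ∀ x ∈ Ω, ∀ y ∈ frontier Ω, K t x y = 0) →
    ∀ (x₀ : Fin n → ℝ) (r₀ : ℝ), 0 < r₀ →
      (Metric.closedBall x₀ (r₀ / 2) ∩ frontier Ω).Nonempty →
    ∀ b : (Fin n → ℝ) → ℂ, Measurable b → eLpNorm b ⊤ volume ≠ ⊤ →
      Function.support b ⊆ Metric.closedBall x₀ (r₀ / 2) ∩ Ω →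
      (∫⁻ x in Ω, ENNReal.ofReal (Φ (nontangMax n Ω K b x))) ≤
        ENNReal.ofReal (C * r₀ ^ n * Φ ((eLpNorm b ⊤ volume).toReal)) :=
  stmt14_general n μ hμ C₀ α hC₀ hα p hp C₁ hC₁
end

section
/- Let n ≥ 1, μ ∈ (0,1] and C₀, α ∈ (0,∞). Let Ω ⊂ ℝⁿ be open and let K : (0,∞)×Ω×Ω → ℂ satisfy, for all t ∈ (0,∞) and x, y, y₁, y₂ ∈ Ω: |K_t(x,y)| ≤ C₀ t^{-n/2} exp(−α‖x−y‖_∞²/t) and |K_t(x,y₁) − K_t(x,y₂)| ≤ C₀ t^{-n/2} (‖y₁−y₂‖_∞/√t)^μ. Let Q₀ = Q(x₀,r₀) be a cube with Q₀ ⊂ Ω and let b : ℝⁿ → ℂ be bounded measurable with supp b ⊂ Q₀ and ∫_{ℝⁿ} b(z) dz = 0. Then for every σ ∈ (0,μ) there exists C, depending only on n, μ, σ, C₀ and α, such that for every x ∈ Ω with ‖x−x₀‖_∞ ≥ 4r₀ and every y ∈ Ω and t ∈ (0,∞) with ‖x−y‖_∞ < t: |∫_Ω K_{t²}(y,z) b(z)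 dz| ≤ C (r₀^{n+σ}/‖x−x₀‖_∞^{n+σ}) ‖b‖_{L^∞}. -/
/-!
Since `b` has mean zero, the constant `K_{t²}(y, x₀)` may be subtracted from the kernel, so the
integral is at most `‖b‖_∞ |Q₀|` times the oscillation of `K_{t²}(y, ·)` over `Q₀`. By Hölder
regularity this oscillation is `≲ t⁻ⁿ (r₀/t)^μ`, which settles the case `t ≳ ‖x - x₀‖`. For smaller
`t` the point `y` is far from `Q₀`, so the Gaussian bound `≲ t⁻ⁿ exp(-c ‖x - x₀‖² / t²)` holds as
well, and the geometric mean of the two bounds with weights `σ/μ` and `1 - σ/μ` has the required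
decay because `s^N e^{-s}` is bounded on `[0, ∞)`.
-/

open MeasureTheory Real
open scoped ENNReal

theorem rpow_mul_exp_neg_mul_le {u N c : ℝ} (hu : 0 ≤ u) (hN : 0 < N) (hc : 0 < c) :
    u ^ N * exp (-(c * u)) ≤ (N / c) ^ N := by
  have hcu : 0 ≤ c * u / N := by positivity
  have hexp : (c * u / N) ^ N ≤ exp (c * u) := by
    calc (c * u / N) ^ N ≤ exp (c * u / N) ^ N :=
          rpow_le_rpow hcu (by linarith [add_one_le_exp (c * u / N)]) hN.le
      _ = exp (c * u) := by rw [← exp_mul, div_mul_cancel₀ _ hN.ne']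
  calc u ^ N * exp (-(c * u)) = (N / c) ^ N * ((c * u / N) ^ N * exp (-(c * u))) := by
        rw [← mul_assoc, ← mul_rpow (by positivity) hcu]
        field_simp
    _ ≤ (N / c) ^ N * (exp (c * u) * exp (-(c * u))) := by gcongr
    _ = (N / c) ^ N := by rw [← exp_add, add_neg_cancel, exp_zero, mul_one]

theorem le_mul_rpow_mul_rpow_of_le_mul {a P X Y θ : ℝ} (ha : 0 ≤ a) (hP : 0 ≤ P)
    (hX : 0 ≤ X) (hY : 0 ≤ Y) (hθ₀ : 0 ≤ θ) (hθ₁ : θ ≤ 1) (haX : a ≤ P * X) (haY : a ≤ P * Y) :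
    a ≤ P * (X ^ θ * Y ^ (1 - θ)) := by
  calc a = a ^ θ * a ^ (1 - θ) := by
        rw [← rpow_add' ha (by norm_num), add_sub_cancel, rpow_one]
    _ ≤ (P * X) ^ θ * (P * Y) ^ (1 - θ) := by gcongr
    _ = (P ^ θ * P ^ (1 - θ)) * (X ^ θ * Y ^ (1 - θ)) := by
        rw [mul_rpow hP hX, mul_rpow hP hY]; ring
    _ = P * (X ^ θ * Y ^ (1 - θ)) := by
        rw [← rpow_add' hP (by norm_num), add_sub_cancel, rpow_one]

/-- The two summands control the regimes `t ≥ D / 2` and `t < D / 2` of `le_decayConst_mul`. -/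
noncomputable def decayConst (n σ μ β : ℝ) : ℝ :=
  2 ^ (n + σ) + ((n + σ) / 2 / ((1 - σ / μ) * β)) ^ ((n + σ) / 2)

theorem two_rpow_le_decayConst {n σ μ β : ℝ} (hn : 0 ≤ n) (hσ : 0 < σ) (hσμ : σ < μ)
    (hβ : 0 ≤ β) : 2 ^ (n + σ) ≤ decayConst n σ μ β := by
  have : σ / μ < 1 := (div_lt_one (hσ.trans hσμ)).2 hσμ
  exact le_add_of_nonneg_right (rpow_nonneg (div_nonneg (by positivity)
    (mul_nonneg (by linarith) hβ)) _)

theorem decayConst_pos {n σ μ β : ℝ} (hn : 0 ≤ n) (hσ : 0 < σ) (hσμ : σ < μ) (hβ : 0 ≤ β) :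
    0 < decayConst n σ μ β :=
  (rpow_pos_of_pos two_pos _).trans_le (two_rpow_le_decayConst hn hσ hσμ hβ)

theorem rpow_neg_mul_div_rpow_eq {n σ r t D : ℝ} (hr : 0 < r) (ht : 0 < t) (hD : 0 < D) :
    t ^ (-n) * (r / t) ^ σ = (D / t) ^ (n + σ) * (r ^ σ / D ^ (n + σ)) := by
  rw [div_rpow hr.le ht.le, div_rpow hD.le ht.le, rpow_neg ht.le, rpow_add ht, rpow_add hD]
  field_simp

theorem le_decayConst_mul {n σ μ β P r t D a : ℝ} (hn : 0 ≤ n) (hσ : 0 < σ) (hσμ : σ < μ)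
    (hβ : 0 < β) (hP : 0 ≤ P) (hr : 0 < r) (ht : 0 < t) (hrD : 2 * r ≤ D) (ha : 0 ≤ a)
    (hH : a ≤ P * t ^ (-n) * (r / t) ^ μ)
    (hG : t < D / 2 → a ≤ P * t ^ (-n) * exp (-(β * (D / t) ^ 2))) :
    a ≤ P * decayConst n σ μ β * (r ^ σ / D ^ (n + σ)) := by
  have hD : 0 < D := by linarith
  have hμ : 0 < μ := hσ.trans hσμ
  have hscale := rpow_neg_mul_div_rpow_eq (n := n) (σ := σ) hr ht hD
  have hθ₁ : σ / μ < 1 := (div_lt_one hμ).2 hσμ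
  have hc : 0 < (1 - σ / μ) * β := mul_pos (by linarith) hβ
  rcases lt_or_ge t (D / 2) with hnear | hfar
  · have hint := le_mul_rpow_mul_rpow_of_le_mul ha (by positivity) (by positivity)
      (exp_pos _).le (div_pos hσ hμ).le hθ₁.le hH (hG hnear)
    have hrθ : ((r / t) ^ μ) ^ (σ / μ) = (r / t) ^ σ := by
      rw [← rpow_mul (by positivity), mul_div_cancel₀ _ hμ.ne']
    have hexpθ : exp (-(β * (D / t) ^ 2)) ^ (1 - σ / μ) =
        exp (-((1 - σ / μ) * β * (D / t) ^ 2)) := by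
      rw [← exp_mul]; ring_nf
    have hsq : (D / t) ^ (n + σ) = ((D / t) ^ 2) ^ ((n + σ) / 2) := by
      rw [← rpow_natCast, ← rpow_mul (by positivity)]; ring_nf
    have hdecay := rpow_mul_exp_neg_mul_le (sq_nonneg (D / t))
      (by positivity : 0 < (n + σ) / 2) hc
    calc a ≤ P * t ^ (-n) * ((r / t) ^ σ * exp (-((1 - σ / μ) * β * (D / t) ^ 2))) := by
          rwa [hrθ, hexpθ] at hint
      _ = P * ((D / t) ^ (n + σ) * exp (-((1 - σ / μ) * β * (D / t) ^ 2))) *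
            (r ^ σ / D ^ (n + σ)) := by
          rw [← mul_assoc, mul_assoc P, hscale]; ring
      _ ≤ P * decayConst n σ μ β * (r ^ σ / D ^ (n + σ)) := by
          gcongr
          rw [decayConst, hsq]
          exact hdecay.trans (le_add_of_nonneg_left (by positivity))
  · have hrt : r / t ≤ 1 := (div_le_one ht).2 (by linarith)
    have hDt : D / t ≤ 2 := (div_le_iff₀ ht).2 (by linarith)
    calc a ≤ P * t ^ (-n) * (r / t) ^ σ :=
          hH.trans (mul_le_mul_of_nonneg_left
            (rpow_le_rpow_of_exponent_ge (by positivity) hrt hσμ.le) (by positivity))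
      _ = P * (D / t) ^ (n + σ) * (r ^ σ / D ^ (n + σ)) := by rw [mul_assoc, hscale]; ring
      _ ≤ P * decayConst n σ μ β * (r ^ σ / D ^ (n + σ)) := by
          gcongr
          calc (D / t) ^ (n + σ) ≤ 2 ^ (n + σ) := by gcongr
            _ ≤ decayConst n σ μ β := two_rpow_le_decayConst hn hσ hσμ hβ.le

theorem norm_sub_le_of_gaussian_of_holder {X E : Type*} [PseudoMetricSpace X]
    [SeminormedAddCommGroup E] {Ω : Set X} {k : X → E} {n μ σ C₀ α t r₀ : ℝ} {x y x₀ z : X}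
    (hn : 0 ≤ n) (hσ : 0 < σ) (hσμ : σ < μ) (hC₀ : 0 ≤ C₀) (hα : 0 < α) (ht : 0 < t)
    (hr₀ : 0 < r₀)
    (hgauss : ∀ w ∈ Ω, ‖k w‖ ≤ C₀ * t ^ (-n) * exp (-(α * dist y w ^ 2 / t ^ 2)))
    (hholder : ∀ w₁ ∈ Ω, ∀ w₂ ∈ Ω, ‖k w₁ - k w₂‖ ≤ C₀ * t ^ (-n) * (dist w₁ w₂ / t) ^ μ)
    (hz : z ∈ Ω) (hx₀ : x₀ ∈ Ω) (hzx₀ : dist z x₀ ≤ r₀ / 2) (hxx₀ : 4 * r₀ ≤ dist x x₀)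
    (hxy : dist x y < t) :
    ‖k z - k x₀‖ ≤ 2 * C₀ * decayConst n σ μ (α / 16) * (r₀ ^ σ / dist x x₀ ^ (n + σ)) := by
  set D := dist x x₀
  have hμ : 0 < μ := hσ.trans hσμ
  refine le_decayConst_mul hn hσ hσμ (by positivity) (by positivity) hr₀ ht (by linarith)
    (norm_nonneg _) ?_ fun hnear => ?_
  · calc ‖k z - k x₀‖ ≤ C₀ * t ^ (-n) * (dist z x₀ / t) ^ μ := hholder z hz x₀ hx₀
      _ ≤ 2 * C₀ * t ^ (-n) * (r₀ / t) ^ μ := by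
          gcongr
          · linarith
          · linarith
  · have hfar : ∀ w ∈ Ω, D / 4 ≤ dist y w →
        ‖k w‖ ≤ C₀ * t ^ (-n) * exp (-(α / 16 * (D / t) ^ 2)) := fun w hw hyw => by
      refine (hgauss w hw).trans ?_
      have hD : α / 16 * (D / t) ^ 2 = α * (D / 4) ^ 2 / t ^ 2 := by ring
      rw [hD]
      gcongr
    have hyz : D / 4 ≤ dist y z := by
      linarith [dist_triangle4 x y z x₀, dist_comm x y]
    have hyx₀ : D / 4 ≤ dist y x₀ := by linarith [dist_triangle x y x₀]
    linarith [norm_sub_le (k z) (k x₀), hfar z hz hyz, hfar x₀ hx₀ hyx₀]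

theorem continuousOn_of_norm_sub_le_rpow {X E : Type*} [PseudoMetricSpace X]
    [SeminormedAddCommGroup E] {f : X → E} {s : Set X} {L μ : ℝ} (hμ : 0 < μ)
    (hf : ∀ x ∈ s, ∀ y ∈ s, ‖f x - f y‖ ≤ L * dist x y ^ μ) : ContinuousOn f s := by
  intro x hx
  rw [ContinuousWithinAt, tendsto_iff_norm_sub_tendsto_zero]
  have hlim : Filter.Tendsto (fun y => L * dist y x ^ μ) (nhdsWithin x s) (nhds 0) := by
    have : Continuous (fun y => L * dist y x ^ μ) := by fun_prop (disch := exact hμ.le)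
    simpa [zero_rpow hμ.ne'] using (this.tendsto x).mono_left nhdsWithin_le_nhds
  exact squeeze_zero' (Filter.Eventually.of_forall fun _ => norm_nonneg _)
    (eventually_nhdsWithin_of_forall fun y hy => hf y hy x hx) hlim

theorem norm_setIntegral_mul_le_of_integral_eq_zero {X 𝕜 : Type*} [MeasurableSpace X]
    [RCLike 𝕜] {ν : Measure X} {s Ω : Set X} {k b : X → 𝕜} {c : 𝕜} {B M : ℝ}
    (hs : MeasurableSet s) (hsΩ : s ⊆ Ω) (hνs : ν s < ∞)
    (hk : AEStronglyMeasurable k (ν.restrict s)) (hb : AEStronglyMeasurable b ν)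
    (hbs : Function.support b ⊆ s) (hb₀ : ∫ z, b z ∂ν = 0)
    (hkc : ∀ z ∈ s, ‖k z - c‖ ≤ B) (hbM : ∀ᵐ z ∂ν, ‖b z‖ ≤ M) :
    ‖∫ z in Ω, k z * b z ∂ν‖ ≤ B * M * ν.real s := by
  have hvanish : ∀ {f : X → 𝕜} {u : Set X}, s ⊆ u → (∀ z, b z = 0 → f z = 0) →
      ∀ z ∉ u, f z = 0 := fun hsu hf z hz =>
    hf z (Function.notMem_support.1 fun hz' => hz (hsu (hbs hz')))
  have hbound : ∀ᵐ z ∂ν.restrict s, ‖(k z - c) * b z‖ ≤ B * M := by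
    filter_upwards [ae_restrict_mem hs, ae_restrict_of_ae hbM] with z hz hbz
    rw [norm_mul]
    exact mul_le_mul (hkc z hz) hbz (norm_nonneg _) ((norm_nonneg _).trans (hkc z hz))
  have hkb : IntegrableOn (fun z => (k z - c) * b z) s ν :=
    ⟨(hk.sub aestronglyMeasurable_const).mul hb.restrict, .restrict_of_bounded _ hνs hbound⟩
  have hbint : IntegrableOn b s ν :=
    Measure.integrableOn_of_bounded hνs.ne hb (ae_restrict_of_ae hbM)
  have hcancel : ∫ z in Ω, k z * b z ∂ν = ∫ z in s, (k z - c) * b z ∂ν := by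
    calc ∫ z in Ω, k z * b z ∂ν = ∫ z in s, ((k z - c) * b z + c * b z) ∂ν := by
          rw [setIntegral_eq_integral_of_forall_compl_eq_zero
              (hvanish hsΩ fun z hz => by simp [hz]),
            ← setIntegral_eq_integral_of_forall_compl_eq_zero
              (hvanish le_rfl fun z hz => by simp [hz])]
          congr 1; funext z; ring
      _ = ∫ z in s, (k z - c) * b z ∂ν := by
          rw [integral_add hkb (hbint.const_mul c), integral_const_mul,
            setIntegral_eq_integral_of_forall_compl_eq_zero (hvanish le_rfl fun _ => id), hb₀,
            mul_zero, add_zero]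
  rw [hcancel]
  exact norm_setIntegral_le_of_norm_le_const_ae hνs hbound

theorem volume_real_closedBall_half {ι : Type*} [Fintype ι] (x : ι → ℝ) {r : ℝ} (hr : 0 ≤ r) :
    volume.real (Metric.closedBall x (r / 2)) = r ^ Fintype.card ι := by
  rw [measureReal_def, Real.volume_pi_closedBall _ (by positivity),
    ENNReal.toReal_ofReal (by positivity), mul_div_cancel₀ _ two_ne_zero]

theorem stmt15_general (n : ℕ) (μ : ℝ) (hμ : μ ∈ Set.Ioc (0:ℝ) 1)
    (C₀ α : ℝ) (hC₀ : 0 < C₀) (hα : 0 < α) (σ : ℝ) (hσ : σ ∈ Set.Ioo (0:ℝ) μ) :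
    ∃ C : ℝ, 0 < C ∧
    ∀ (Ω : Set (Fin n → ℝ)), IsOpen Ω →
    ∀ K : ℝ → (Fin n → ℝ) → (Fin n → ℝ) → ℂ,
      (∀ t : ℝ, 0 < t → ∀ x ∈ Ω, ∀ y ∈ Ω,
        ‖K t x y‖ ≤
          C₀ * t ^ (-(n : ℝ) / 2) * Real.exp (-(α * dist x y ^ 2 / t))) →
      (∀ t : ℝ, 0 < t → ∀ x ∈ Ω, ∀ y₁ ∈ Ω, ∀ y₂ ∈ Ω,
        ‖K t x y₁ - K t x y₂‖ ≤
          C₀ * t ^ (-(n : ℝ) / 2) * (dist y₁ y₂ / Real.sqrt t) ^ μ) →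
    ∀ (x₀ : Fin n → ℝ) (r₀ : ℝ), 0 < r₀ → Metric.closedBall x₀ (r₀ / 2) ⊆ Ω →
    ∀ b : (Fin n → ℝ) → ℂ, Measurable b → eLpNorm b ⊤ volume ≠ ⊤ →
      Function.support b ⊆ Metric.closedBall x₀ (r₀ / 2) →
      (∫ z, b z) = 0 →
    ∀ x ∈ Ω, 4 * r₀ ≤ dist x x₀ →
    ∀ y ∈ Ω, ∀ t : ℝ, 0 < t → dist x y < t →
      ‖∫ z in Ω, K (t ^ 2) y z * b z‖ ≤
        C * (r₀ ^ ((n : ℝ) + σ) / dist x x₀ ^ ((n : ℝ) + σ)) *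
          (eLpNorm b ⊤ volume).toReal := by
  obtain ⟨hμ₀, -⟩ := hμ
  obtain ⟨hσ₀, hσμ⟩ := hσ
  refine ⟨2 * C₀ * decayConst n σ μ (α / 16),
    mul_pos (by positivity) (decayConst_pos (Nat.cast_nonneg n) hσ₀ hσμ (by positivity)), ?_⟩
  intro Ω _ K hK₁ hK₂ x₀ r₀ hr₀ hQΩ b hb hb_top hbQ hb₀ x _ hxx₀ y hy t ht hxy
  have ht₂ : 0 < t ^ 2 := by positivity
  have hpow : (t ^ 2) ^ (-(n : ℝ) / 2) = t ^ (-(n : ℝ)) := by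
    rw [← rpow_natCast, ← rpow_mul ht.le]; ring_nf
  have hgauss : ∀ w ∈ Ω,
      ‖K (t ^ 2) y w‖ ≤ C₀ * t ^ (-(n : ℝ)) * exp (-(α * dist y w ^ 2 / t ^ 2)) :=
    fun w hw => by simpa only [hpow] using hK₁ _ ht₂ y hy w hw
  have hholder : ∀ w₁ ∈ Ω, ∀ w₂ ∈ Ω, ‖K (t ^ 2) y w₁ - K (t ^ 2) y w₂‖ ≤
      C₀ * t ^ (-(n : ℝ)) * (dist w₁ w₂ / t) ^ μ := fun w₁ hw₁ w₂ hw₂ => by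
    simpa only [hpow, sqrt_sq ht.le] using hK₂ _ ht₂ y hy w₁ hw₁ w₂ hw₂
  have hcont : ContinuousOn (K (t ^ 2) y) Ω :=
    continuousOn_of_norm_sub_le_rpow hμ₀ fun w₁ hw₁ w₂ hw₂ => (hholder w₁ hw₁ w₂ hw₂).trans_eq
      (by rw [div_rpow dist_nonneg ht.le, mul_div_assoc', div_mul_eq_mul_div])
  have hx₀ : x₀ ∈ Ω := hQΩ (Metric.mem_closedBall_self (by positivity))
  calc ‖∫ z in Ω, K (t ^ 2) y z * b z‖
      ≤ 2 * C₀ * decayConst n σ μ (α / 16) * (r₀ ^ σ / dist x x₀ ^ ((n : ℝ) + σ)) *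
          lpNorm b ∞ volume * volume.real (Metric.closedBall x₀ (r₀ / 2)) :=
        norm_setIntegral_mul_le_of_integral_eq_zero measurableSet_closedBall hQΩ
          measure_closedBall_lt_top ((hcont.mono hQΩ).aestronglyMeasurable measurableSet_closedBall)
          hb.aestronglyMeasurable hbQ hb₀
          (fun z hz => norm_sub_le_of_gaussian_of_holder (Nat.cast_nonneg n) hσ₀ hσμ hC₀.le hα
            ht hr₀ hgauss hholder (hQΩ hz) hx₀ hz hxx₀ hxy)
          (ae_le_lpNorm_exponent_top ⟨hb.aestronglyMeasurable, hb_top.lt_top⟩)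
    _ = _ := by
      rw [toReal_eLpNorm hb.aestronglyMeasurable, volume_real_closedBall_half _ hr₀.le,
        Fintype.card_fin, rpow_add hr₀, rpow_natCast]
      ring

/-- pointwise nontangential decay estimate for `e^{-t²L}b` when `b` is a bounded
function supported in a cube `Q₀ = Q(x₀,r₀) ⊂ Ω` (here `Q₀ = closedBall x₀ (r₀/2)` for the
sup-norm on `ℝⁿ = Fin n → ℝ`) with vanishing integral: for every `σ ∈ (0,μ)` there is `C`
(depending only on `n, μ, σ, C₀, α`) such that for all `x ∈ Ω` with `‖x−x₀‖_∞ ≥ 4r₀` and all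
`(y,t)` with `y ∈ Ω`, `t > 0`, `‖x−y‖_∞ < t`:
`|∫_Ω K_{t²}(y,z) b(z) dz| ≤ C (r₀^{n+σ}/‖x−x₀‖_∞^{n+σ}) ‖b‖_{L^∞}`. -/
theorem stmt15 (n : ℕ) (hn : 1 ≤ n) (μ : ℝ) (hμ : μ ∈ Set.Ioc (0:ℝ) 1)
    (C₀ α : ℝ) (hC₀ : 0 < C₀) (hα : 0 < α) (σ : ℝ) (hσ : σ ∈ Set.Ioo (0:ℝ) μ) :
    ∃ C : ℝ, 0 < C ∧
    ∀ (Ω : Set (Fin n → ℝ)), IsOpen Ω →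
    ∀ K : ℝ → (Fin n → ℝ) → (Fin n → ℝ) → ℂ,
      (∀ t : ℝ, 0 < t → ∀ x ∈ Ω, ∀ y ∈ Ω,
        ‖K t x y‖ ≤
          C₀ * t ^ (-(n : ℝ) / 2) * Real.exp (-(α * dist x y ^ 2 / t))) →
      (∀ t : ℝ, 0 < t → ∀ x ∈ Ω, ∀ y₁ ∈ Ω, ∀ y₂ ∈ Ω,
        ‖K t x y₁ - K t x y₂‖ ≤
          C₀ * t ^ (-(n : ℝ) / 2) * (dist y₁ y₂ / Real.sqrt t) ^ μ) →
    ∀ (x₀ : Fin n → ℝ) (r₀ : ℝ), 0 < r₀ → Metric.closedBall x₀ (r₀ / 2) ⊆ Ω →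
    ∀ b : (Fin n → ℝ) → ℂ, Measurable b → eLpNorm b ⊤ volume ≠ ⊤ →
      Function.support b ⊆ Metric.closedBall x₀ (r₀ / 2) →
      (∫ z, b z) = 0 →
    ∀ x ∈ Ω, 4 * r₀ ≤ dist x x₀ →
    ∀ y ∈ Ω, ∀ t : ℝ, 0 < t → dist x y < t →
      ‖∫ z in Ω, K (t ^ 2) y z * b z‖ ≤
        C * (r₀ ^ ((n : ℝ) + σ) / dist x x₀ ^ ((n : ℝ) + σ)) *
          (eLpNorm b ⊤ volume).toReal :=
  stmt15_general n μ hμ C₀ α hC₀ hα σ hσ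
end
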